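/- arXiv:2011.13715 — 10 statements merged into one kernel-verified Lean document; each statement's English description precedes it below -/
import Mathlib

section
/- For integers n1 ≥ n2 ≥ n3 ≥ 1, there exists a subgraph G of K_{n1,n2,n3} with exactly n1·n2 + 2·n3 edges that contains no multipartite 4-cycle; for example, the graph consisting of all edges between V1 and V2 together with two matchings of size n3, one joining each vertex of V3 to a distinct vertex of V1 and one joining each vertex of V3 to a distinct vertex of V2. -/
/-- The part (in `Fin 3`) of a vertex of the complete 3-partite graph. -/
def triPart {n1 n2 n3 : ℕ} : Fin n1 ⊕ Fin n2 ⊕ Fin n3 → Fin 3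
  | Sum.inl _ => 0
  | Sum.inr (Sum.inl _) => 1
  | Sum.inr (Sum.inr _) => 2

/-- The complete 3-partite graph `K_{n1,n2,n3}`. -/
def triK (n1 n2 n3 : ℕ) : SimpleGraph (Fin n1 ⊕ Fin n2 ⊕ Fin n3) where
  Adj u v := triPart u ≠ triPart v
  symm := ⟨fun _ _ h => Ne.symm h⟩
  loopless := ⟨fun _ h => h rfl⟩

/-- `G` (a graph with partition function `p` into three parts) contains a multipartite
4-cycle: a 4-cycle whose vertex set meets all three parts. -/
def HasC4Multi {V : Type*} (G : SimpleGraph V) (p : V → Fin 3) : Prop :=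
  ∃ a b c d : V,
    a ≠ b ∧ a ≠ c ∧ a ≠ d ∧ b ≠ c ∧ b ≠ d ∧ c ≠ d ∧
    G.Adj a b ∧ G.Adj b c ∧ G.Adj c d ∧ G.Adj d a ∧
    (∀ i : Fin 3, ∃ v ∈ ({a, b, c, d} : Set V), p v = i)

/-- An edge-coloring `c` of `G` admits a rainbow multipartite 4-cycle. -/
def HasRainbowC4Multi {V : Type*} (G : SimpleGraph V) (p : V → Fin 3)
    (c : Sym2 V → ℕ) : Prop :=
  ∃ a b d e : V,
    a ≠ b ∧ a ≠ d ∧ a ≠ e ∧ b ≠ d ∧ b ≠ e ∧ d ≠ e ∧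
    G.Adj a b ∧ G.Adj b d ∧ G.Adj d e ∧ G.Adj e a ∧
    (∀ i : Fin 3, ∃ v ∈ ({a, b, d, e} : Set V), p v = i) ∧
    List.Pairwise (· ≠ ·) [c s(a, b), c s(b, d), c s(d, e), c s(e, a)]

/-!
Take all edges between `V₁` and `V₂` and join the `k`-th vertex of `V₃` to the `k`-th vertices
`x ∈ V₁` and `y ∈ V₂`. A multipartite 4-cycle passes through some `w ∈ V₃`, whose only neighbours
are `x` and `y`, so the vertex opposite `w` is another common neighbour of `x` and `y`. A common
neighbour of a vertex of `V₁` and a vertex of `V₂` lies in `V₃`, and the matching `V₃ → V₂` is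
injective, so that vertex is `w` itself.
-/

open Function

namespace SimpleGraph

variable {V : Type*} {G : SimpleGraph V} {w x y b c d : V}

theorem eq_of_fourCycle_of_adj_eq_or_eq (hw : ∀ v, G.Adj w v → v = x ∨ v = y)
    (hxy : ∀ v, G.Adj x v → G.Adj y v → v = w) (hbd : b ≠ d)
    (hwb : G.Adj w b) (hbc : G.Adj b c) (hcd : G.Adj c d) (hdw : G.Adj d w) : c = w := by
  rcases hw b hwb with rfl | rfl <;> rcases hw d hdw.symm with rfl | rfl
  · exact absurd rfl hbd
  · exact hxy c hbc hcd.symm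
  · exact hxy c hcd.symm hbc
  · exact absurd rfl hbd

end SimpleGraph

section MatchedGraph

variable {α β γ : Type*} (f : γ → α) (g : γ → β)

def matchedGraph : SimpleGraph (α ⊕ β ⊕ γ) where
  Adj
    | .inl _, .inr (.inl _) | .inr (.inl _), .inl _ => True
    | .inl a, .inr (.inr c) | .inr (.inr c), .inl a => f c = a
    | .inr (.inl b), .inr (.inr c) | .inr (.inr c), .inr (.inl b) => g c = b
    | _, _ => False
  symm := ⟨by rintro (_ | _ | _) (_ | _ | _) h <;> simp_all⟩
  loopless := ⟨by rintro (_ | _ | _) h <;> simp_all⟩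

theorem matchedGraph_adj_inr_inr (c : γ) :
    ∀ u, (matchedGraph f g).Adj (.inr (.inr c)) u → u = .inl (f c) ∨ u = .inr (.inl (g c)) := by
  rintro (_ | _ | _) h <;> simp_all [matchedGraph, eq_comm]

theorem eq_inr_inr_of_matchedGraph_adj_of_adj {g : γ → β} (hg : Injective g) (c : γ) :
    ∀ u, (matchedGraph f g).Adj (.inl (f c)) u → (matchedGraph f g).Adj (.inr (.inl (g c))) u →
      u = .inr (.inr c) := by
  rintro (_ | _ | _) h₁ h₂ <;> simp_all [matchedGraph, hg.eq_iff]

def matchedEdge : α × β ⊕ γ ⊕ γ → Sym2 (α ⊕ β ⊕ γ)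
  | .inl (a, b) => s(.inl a, .inr (.inl b))
  | .inr (.inl c) => s(.inl (f c), .inr (.inr c))
  | .inr (.inr c) => s(.inr (.inl (g c)), .inr (.inr c))

theorem matchedEdge_injective : Injective (matchedEdge f g) := by
  rintro (⟨_, _⟩ | _ | _) (⟨_, _⟩ | _ | _) h <;> simp_all [matchedEdge]

theorem edgeSet_matchedGraph : (matchedGraph f g).edgeSet = Set.range (matchedEdge f g) := by
  ext e
  induction e using Sym2.ind with
  | _ u v =>
    rcases u with _ | _ | _ <;> rcases v with _ | _ | _ <;> simp [matchedGraph, matchedEdge]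

theorem ncard_edgeSet_matchedGraph [Finite α] [Finite β] [Finite γ] :
    (matchedGraph f g).edgeSet.ncard = Nat.card α * Nat.card β + 2 * Nat.card γ := by
  rw [edgeSet_matchedGraph, Set.ncard_range_of_injective (matchedEdge_injective f g),
    Nat.card_sum, Nat.card_sum, Nat.card_prod]
  ring

end MatchedGraph

section Tripartite

open SimpleGraph

variable {n1 n2 n3 : ℕ}

theorem matchedGraph_le_triK (f : Fin n3 → Fin n1) (g : Fin n3 → Fin n2) :
    matchedGraph f g ≤ triK n1 n2 n3 := by
  rintro (_ | _ | _) (_ | _ | _) h <;> simp_all [matchedGraph, triK, triPart]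

theorem exists_eq_inr_inr_of_triPart_eq_two {v : Fin n1 ⊕ Fin n2 ⊕ Fin n3}
    (hv : triPart v = 2) : ∃ k, v = .inr (.inr k) := by
  rcases v with _ | _ | k
  · simp [triPart] at hv
  · simp [triPart] at hv
  · exact ⟨k, rfl⟩

theorem not_hasC4Multi_matchedGraph (f : Fin n3 → Fin n1) {g : Fin n3 → Fin n2}
    (hg : Injective g) : ¬ HasC4Multi (matchedGraph f g) triPart := by
  rintro ⟨a, b, c, d, -, hac, -, -, hbd, -, hab, hbc, hcd, hda, hmeet⟩
  obtain ⟨v, hv, hv2⟩ := hmeet 2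
  obtain ⟨k, rfl⟩ := exists_eq_inr_inr_of_triPart_eq_two hv2
  have opposite {b c d} := eq_of_fourCycle_of_adj_eq_or_eq (b := b) (c := c) (d := d)
    (matchedGraph_adj_inr_inr f g k) (eq_inr_inr_of_matchedGraph_adj_of_adj f hg k)
  simp only [Set.mem_insert_iff, Set.mem_singleton_iff] at hv
  rcases hv with rfl | rfl | rfl | rfl
  · exact hac.symm (opposite hbd hab hbc hcd hda)
  · exact hbd.symm (opposite hac.symm hbc hcd hda hab)
  · exact hac (opposite hbd.symm hcd hda hab hbc)
  · exact hbd (opposite hac hda hab hbc hcd)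

end Tripartite

theorem turan_C4multi_lower_general (n1 n2 n3 : ℕ) (h12 : n2 ≤ n1) (h23 : n3 ≤ n2) :
    ∃ G : SimpleGraph (Fin n1 ⊕ Fin n2 ⊕ Fin n3),
      G ≤ triK n1 n2 n3 ∧ ¬ HasC4Multi G triPart ∧ G.edgeSet.ncard = n1 * n2 + 2 * n3 := by
  let f : Fin n3 → Fin n1 := Fin.castLE (h23.trans h12)
  let g : Fin n3 → Fin n2 := Fin.castLE h23
  refine ⟨matchedGraph f g, matchedGraph_le_triK f g,
    not_hasC4Multi_matchedGraph f (Fin.castLE_injective h23), ?_⟩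
  simpa using ncard_edgeSet_matchedGraph f g

/-- there is a `C4^multi`-free subgraph of `K_{n1,n2,n3}` with exactly
`n1*n2 + 2*n3` edges. -/
theorem turan_C4multi_lower (n1 n2 n3 : ℕ) (h12 : n2 ≤ n1) (h23 : n3 ≤ n2) (h3 : 1 ≤ n3) :
    ∃ G : SimpleGraph (Fin n1 ⊕ Fin n2 ⊕ Fin n3),
      G ≤ triK n1 n2 n3 ∧ ¬ HasC4Multi G triPart ∧ G.edgeSet.ncard = n1 * n2 + 2 * n3 :=
  turan_C4multi_lower_general n1 n2 n3 h12 h23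
end

section
/- For integers n1 ≥ n2 ≥ n3 ≥ 1, there exists a subgraph G of K_{n1,n2,n3} with exactly n1·n2 + n3 edges that contains no triangle and no multipartite 4-cycle; for example, the graph consisting of all edges between V1 and V2, together with a matching of size n3 joining each vertex of V3 to a distinct vertex of V1, and no edges between V2 and V3. -/
theorem not_hasC4Multi_of_adj_unique {V : Type*} {G : SimpleGraph V} {p : V → Fin 3} (i : Fin 3)
    (h : ∀ v, p v = i → ∀ x y, G.Adj v x → G.Adj v y → x = y) : ¬ HasC4Multi G p := by
  rintro ⟨a, b, c, d, -, hac, -, -, hbd, -, hab, hbc, hcd, hda, hall⟩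
  obtain ⟨v, hv, hvi⟩ := hall i
  simp only [Set.mem_insert_iff, Set.mem_singleton_iff] at hv
  rcases hv with rfl | rfl | rfl | rfl
  · exact hbd (h _ hvi _ _ hab hda.symm)
  · exact hac (h _ hvi _ _ hab.symm hbc)
  · exact hbd (h _ hvi _ _ hbc.symm hcd)
  · exact hac (h _ hvi _ _ hda hcd.symm)

namespace SimpleGraph

variable {α β γ : Type*}

def pendantEdge (f : γ → α) : α × β ⊕ γ → Sym2 (α ⊕ β ⊕ γ)
  | .inl (a, b) => s(.inl a, .inr (.inl b))
  | .inr c => s(.inl (f c), .inr (.inr c))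

theorem pendantEdge_injective (f : γ → α) : (pendantEdge (β := β) f).Injective := by
  rintro (⟨a, b⟩ | c) (⟨a', b'⟩ | c') h <;> simp_all [pendantEdge]

theorem pendantEdge_not_isDiag (f : γ → α) (e : α × β ⊕ γ) : ¬ (pendantEdge f e).IsDiag := by
  rcases e with ⟨a, b⟩ | c <;> simp [pendantEdge]

variable (β) in
/-- For injective `f` the pendant edges form the matching of the paper's construction. -/
def completeBipartiteWithPendants (f : γ → α) : SimpleGraph (α ⊕ β ⊕ γ) :=
  fromEdgeSet (Set.range (pendantEdge f))

theorem edgeSet_completeBipartiteWithPendants (f : γ → α) :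
    (completeBipartiteWithPendants β f).edgeSet = Set.range (pendantEdge f) := by
  rw [completeBipartiteWithPendants, edgeSet_fromEdgeSet, sdiff_eq_left,
    Set.disjoint_right]
  rintro _ hdiag ⟨e, rfl⟩
  exact pendantEdge_not_isDiag f e hdiag

theorem completeBipartiteWithPendants_adj {f : γ → α} {u v : α ⊕ β ⊕ γ} :
    (completeBipartiteWithPendants β f).Adj u v ↔
      ∃ e, pendantEdge f e = s(u, v) := by
  rw [← mem_edgeSet, edgeSet_completeBipartiteWithPendants, Set.mem_range]

theorem ncard_edgeSet_completeBipartiteWithPendants [Finite α] [Finite β] [Finite γ]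
    (f : γ → α) :
    (completeBipartiteWithPendants β f).edgeSet.ncard = Nat.card α * Nat.card β + Nat.card γ := by
  rw [edgeSet_completeBipartiteWithPendants, Set.ncard_range_of_injective
    (pendantEdge_injective f), Nat.card_sum, Nat.card_prod]

theorem completeBipartiteWithPendants_le_completeBipartiteGraph (f : γ → α) :
    completeBipartiteWithPendants β f ≤ completeBipartiteGraph α (β ⊕ γ) := by
  intro u v huv
  obtain ⟨⟨a, b⟩ | c, he⟩ := completeBipartiteWithPendants_adj.1 huv <;>
    rcases Sym2.eq_iff.1 he with ⟨rfl, rfl⟩ | ⟨rfl, rfl⟩ <;> simp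

theorem completeBipartiteWithPendants_cliqueFree_three (f : γ → α) :
    (completeBipartiteWithPendants β f).CliqueFree 3 :=
  (((CompleteBipartiteGraph.bicoloring α (β ⊕ γ)).colorable).mono_left
    (completeBipartiteWithPendants_le_completeBipartiteGraph f)).cliqueFree (by simp)

theorem completeBipartiteWithPendants_adj_inr_inr {f : γ → α} {c : γ} {v : α ⊕ β ⊕ γ} :
    (completeBipartiteWithPendants β f).Adj (.inr (.inr c)) v ↔ v = .inl (f c) := by
  rw [completeBipartiteWithPendants_adj]
  constructor
  · rintro ⟨⟨a, b⟩ | c', he⟩ <;> rcases Sym2.eq_iff.1 he with ⟨h, rfl⟩ | ⟨rfl, h⟩ <;>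
      simp_all
  · rintro rfl
    exact ⟨.inr c, Sym2.eq_swap⟩

theorem completeBipartiteWithPendants_le_triK {n1 n2 n3 : ℕ} (f : Fin n3 → Fin n1) :
    completeBipartiteWithPendants (Fin n2) f ≤ triK n1 n2 n3 := by
  intro u v huv
  obtain ⟨⟨a, b⟩ | c, he⟩ := completeBipartiteWithPendants_adj.1 huv <;>
    rcases Sym2.eq_iff.1 he with ⟨rfl, rfl⟩ | ⟨rfl, rfl⟩ <;> simp [triK, triPart]

end SimpleGraph

open SimpleGraph

theorem turan_C3_C4multi_lower_general (n1 n2 n3 : ℕ) (h12 : n2 ≤ n1) (h23 : n3 ≤ n2) :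
    ∃ G : SimpleGraph (Fin n1 ⊕ Fin n2 ⊕ Fin n3),
      G ≤ triK n1 n2 n3 ∧ G.CliqueFree 3 ∧ ¬ HasC4Multi G triPart ∧
      G.edgeSet.ncard = n1 * n2 + n3 := by
  refine ⟨completeBipartiteWithPendants (Fin n2) (Fin.castLE (h23.trans h12)),
    completeBipartiteWithPendants_le_triK _, completeBipartiteWithPendants_cliqueFree_three _,
    not_hasC4Multi_of_adj_unique 2 ?_, by simp [ncard_edgeSet_completeBipartiteWithPendants]⟩
  rintro (_ | _ | c) hc x y hx hy
  · simp [triPart] at hc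
  · simp [triPart] at hc
  · rw [completeBipartiteWithPendants_adj_inr_inr] at hx hy
    rw [hx, hy]

/-- there is a subgraph of `K_{n1,n2,n3}` with no triangle and no
multipartite 4-cycle and exactly `n1*n2 + n3` edges. -/
theorem turan_C3_C4multi_lower (n1 n2 n3 : ℕ) (h12 : n2 ≤ n1) (h23 : n3 ≤ n2) (h3 : 1 ≤ n3) :
    ∃ G : SimpleGraph (Fin n1 ⊕ Fin n2 ⊕ Fin n3),
      G ≤ triK n1 n2 n3 ∧ G.CliqueFree 3 ∧ ¬ HasC4Multi G triPart ∧
      G.edgeSet.ncard = n1 * n2 + n3 :=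
  turan_C3_C4multi_lower_general n1 n2 n3 h12 h23
end

section
/- For integers n1 ≥ n2 ≥ n3 ≥ 1, there is an edge-coloring of K_{n1,n2,n3} using exactly n1·n2 + n3 + 1 colors with no rainbow multipartite 4-cycle: give every edge between V1 and V2 its own distinct color (n1·n2 colors), for each vertex v of V3 color all edges between v and V1 with one new color assigned to v (n3 colors), and color all edges between V2 and V3 with one further new color. -/
/-!
Colour the `V₁V₂` edges injectively, give the edges from `w ∈ V₃` to `V₁` a colour `κ(w)`, and
give all `V₂V₃` edges one further colour. A multipartite 4-cycle passes through some `w ∈ V₃`. If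
both cycle-neighbours of `w` lie in the same part, the two cycle edges at `w` share a colour.
Otherwise they lie in `V₁` and `V₂`, so the vertex opposite to `w` is in `V₃` as well, and the two
cycle edges joining these `V₃`-vertices to the `V₂`-vertex share the last colour.
-/

open SimpleGraph

variable {n1 n2 n3 : ℕ}

@[simp]
lemma triK_adj {u v : Fin n1 ⊕ Fin n2 ⊕ Fin n3} : (triK n1 n2 n3).Adj u v ↔ triPart u ≠ triPart v :=
  Iff.rfl

/-- Pairs inside one part, which are not edges, get the last colour as a junk value. -/
def triColor (n1 n2 n3 : ℕ) : Fin n1 ⊕ Fin n2 ⊕ Fin n3 → Fin n1 ⊕ Fin n2 ⊕ Fin n3 → ℕ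
  | .inl i, .inr (.inl j) | .inr (.inl j), .inl i => finProdFinEquiv (i, j)
  | .inl _, .inr (.inr k) | .inr (.inr k), .inl _ => n1 * n2 + k
  | _, _ => n1 * n2 + n3

lemma triColor_comm (u v : Fin n1 ⊕ Fin n2 ⊕ Fin n3) :
    triColor n1 n2 n3 u v = triColor n1 n2 n3 v u := by
  rcases u with _ | _ | _ <;> rcases v with _ | _ | _ <;> rfl

def triColoring (n1 n2 n3 : ℕ) : Sym2 (Fin n1 ⊕ Fin n2 ⊕ Fin n3) → ℕ :=
  Sym2.lift ⟨triColor n1 n2 n3, triColor_comm⟩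

@[simp]
lemma triColoring_mk (u v : Fin n1 ⊕ Fin n2 ⊕ Fin n3) :
    triColoring n1 n2 n3 s(u, v) = triColor n1 n2 n3 u v :=
  rfl

lemma triColor_lt (u v : Fin n1 ⊕ Fin n2 ⊕ Fin n3) :
    triColor n1 n2 n3 u v < n1 * n2 + n3 + 1 := by
  rcases u with i | j | k <;> rcases v with i' | j' | k' <;> simp only [triColor] <;> omega

lemma exists_adj_triColor_eq (hn1 : 0 < n1) (hn2 : 0 < n2) (hn3 : 0 < n3) {m : ℕ}
    (hm : m < n1 * n2 + n3 + 1) :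
    ∃ u v, (triK n1 n2 n3).Adj u v ∧ triColor n1 n2 n3 u v = m := by
  obtain hm₁ | hm₁ := lt_or_ge m (n1 * n2)
  · obtain ⟨⟨i, j⟩, hij⟩ := finProdFinEquiv.surjective ⟨m, hm₁⟩
    exact ⟨.inl i, .inr (.inl j), by simp [triPart], by simp only [triColor, hij]⟩
  obtain hm₂ | hm₂ := lt_or_ge m (n1 * n2 + n3)
  · exact ⟨.inl ⟨0, hn1⟩, .inr (.inr ⟨m - n1 * n2, by omega⟩), by simp [triPart],
      by simp only [triColor]; omega⟩
  · exact ⟨.inr (.inl ⟨0, hn2⟩), .inr (.inr ⟨0, hn3⟩), by simp [triPart],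
      by simp only [triColor]; omega⟩

lemma triColoring_image_edgeSet (hn1 : 0 < n1) (hn2 : 0 < n2) (hn3 : 0 < n3) :
    triColoring n1 n2 n3 '' (triK n1 n2 n3).edgeSet = Set.Iio (n1 * n2 + n3 + 1) := by
  ext m
  constructor
  · rintro ⟨e, -, rfl⟩
    induction e using Sym2.ind with
    | _ u v => exact triColor_lt u v
  · intro hm
    obtain ⟨u, v, huv, rfl⟩ := exists_adj_triColor_eq hn1 hn2 hn3 hm
    exact ⟨s(u, v), huv, rfl⟩

lemma triColor_eq_of_triPart_eq {w x y : Fin n1 ⊕ Fin n2 ⊕ Fin n3} (hw : triPart w = 2)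
    (hxy : triPart x = triPart y) : triColor n1 n2 n3 w x = triColor n1 n2 n3 w y := by
  rcases w with _ | _ | _ <;> rcases x with _ | _ | _ <;> rcases y with _ | _ | _ <;>
    simp_all [triPart, triColor]

lemma triColor_eq_of_triPart_eq_two_of_eq_one {w y : Fin n1 ⊕ Fin n2 ⊕ Fin n3} (hw : triPart w = 2)
    (hy : triPart y = 1) : triColor n1 n2 n3 w y = n1 * n2 + n3 := by
  rcases w with _ | _ | _ <;> rcases y with _ | _ | _ <;> simp_all [triPart, triColor]

lemma not_pairwise_triColoring_of_triPart_eq_two {a b d e : Fin n1 ⊕ Fin n2 ⊕ Fin n3}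
    (hab : (triK n1 n2 n3).Adj a b) (hbd : (triK n1 n2 n3).Adj b d)
    (hde : (triK n1 n2 n3).Adj d e) (hea : (triK n1 n2 n3).Adj e a) (ha : triPart a = 2) :
    ¬ List.Pairwise (· ≠ ·) [triColoring n1 n2 n3 s(a, b), triColoring n1 n2 n3 s(b, d),
      triColoring n1 n2 n3 s(d, e), triColoring n1 n2 n3 s(e, a)] := by
  simp only [List.pairwise_cons, List.mem_cons, List.not_mem_nil, or_false, forall_eq_or_imp,
    forall_eq, triColoring_mk, List.Pairwise.nil, IsEmpty.forall_iff, implies_true, and_true]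
  rintro ⟨⟨h12, -, h14⟩, -, h34⟩
  rw [triK_adj] at hab hbd hde hea
  by_cases hbe : triPart b = triPart e
  · exact h14 (by rw [triColor_comm e]; exact triColor_eq_of_triPart_eq ha hbe)
  have hd : triPart d = 2 := by omega
  obtain hb | he : triPart b = 1 ∨ triPart e = 1 := by omega
  · refine h12 ?_
    rw [triColor_comm b d, triColor_eq_of_triPart_eq_two_of_eq_one ha hb,
      triColor_eq_of_triPart_eq_two_of_eq_one hd hb]
  · refine h34 ?_
    rw [triColor_eq_of_triPart_eq_two_of_eq_one hd he, triColor_comm e,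
      triColor_eq_of_triPart_eq_two_of_eq_one ha he]

lemma List.Pairwise.rotate_one_ne {α : Type*} {x y z t : α}
    (h : List.Pairwise (· ≠ ·) [x, y, z, t]) : List.Pairwise (· ≠ ·) [y, z, t, x] :=
  (List.rotate_perm [x, y, z, t] 1).symm.pairwise h Ne.symm

lemma not_hasRainbowC4Multi_triColoring :
    ¬ HasRainbowC4Multi (triK n1 n2 n3) triPart (triColoring n1 n2 n3) := by
  rintro ⟨a, b, d, e, -, -, -, -, -, -, hab, hbd, hde, hea, hcover, h⟩
  obtain ⟨v, hv, hv2⟩ := hcover 2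
  simp only [Set.mem_insert_iff, Set.mem_singleton_iff] at hv
  rcases hv with rfl | rfl | rfl | rfl
  · exact not_pairwise_triColoring_of_triPart_eq_two hab hbd hde hea hv2 h
  · exact not_pairwise_triColoring_of_triPart_eq_two hbd hde hea hab hv2 h.rotate_one_ne
  · exact not_pairwise_triColoring_of_triPart_eq_two hde hea hab hbd hv2
      h.rotate_one_ne.rotate_one_ne
  · exact not_pairwise_triColoring_of_triPart_eq_two hea hab hbd hde hv2
      h.rotate_one_ne.rotate_one_ne.rotate_one_ne

/-- there is an edge-coloring of `K_{n1,n2,n3}` using exactly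
`n1*n2 + n3 + 1` colors with no rainbow multipartite 4-cycle. -/
theorem antiRamsey_C4multi_lower (n1 n2 n3 : ℕ) (h12 : n2 ≤ n1) (h23 : n3 ≤ n2) (h3 : 1 ≤ n3) :
    ∃ c : Sym2 (Fin n1 ⊕ Fin n2 ⊕ Fin n3) → ℕ,
      (c '' (triK n1 n2 n3).edgeSet).ncard = n1 * n2 + n3 + 1 ∧
      ¬ HasRainbowC4Multi (triK n1 n2 n3) triPart c := by
  refine ⟨triColoring n1 n2 n3, ?_, not_hasRainbowC4Multi_triColoring⟩
  rw [triColoring_image_edgeSet (by omega) (by omega) (by omega), Set.ncard_Iio_nat]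
end

section
/- Let G be a 3-partite graph with nonempty vertex parts X, Y, Z such that every vertex x in X has at least one neighbor in Y and at least one neighbor in Z. If G contains no multipartite 4-cycle, then e(G) ≤ |Y|·|Z| + 2·|X|. -/
/-! For `x ∈ X` write `N_Y(x)`, `N_Z(x)` for its neighbourhoods in `Y` and `Z`. With no
multipartite 4-cycle, the edges between `N_Y(x)` and `N_Z(x)` form a matching, so (both
neighbourhoods being nonempty) at least `|N_Y(x)|·|N_Z(x)| - min ≥ deg x - 2` pairs of
`N_Y(x) × N_Z(x)` are non-edges; and the non-edge sets of distinct `x, x'` are disjoint, since a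
common non-edge `(y, z)` would give the 4-cycle `y x z x'`. Hence
`e(G) ≤ ∑ₓ deg x + e(Y, Z) ≤ (|Y||Z| - e(Y, Z)) + 2|X| + e(Y, Z)`. -/

open Finset

namespace Rel

variable {α β : Type*} {r : α → β → Prop} [∀ a, DecidablePred (r a)] {s : Finset α}
  {t : Finset β}

theorem card_add_card_le_card_interedges_compl_add_two (hs : s.Nonempty) (ht : t.Nonempty)
    (hfst : Set.InjOn Prod.fst (interedges r s t : Set (α × β)))
    (hsnd : Set.InjOn Prod.snd (interedges r s t : Set (α × β))) :
    #s + #t ≤ #(interedges (fun x y ↦ ¬r x y) s t) + 2 := by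
  have hs' : #(interedges r s t) ≤ #s :=
    card_le_card_of_injOn _ (fun e he ↦ (mem_interedges_iff.1 he).1) hfst
  have ht' : #(interedges r s t) ≤ #t :=
    card_le_card_of_injOn _ (fun e he ↦ (mem_interedges_iff.1 he).2.1) hsnd
  have hsplit := card_interedges_add_card_interedges_compl r s t
  have hs1 := hs.card_pos
  obtain ht1 | ht2 : #t = 1 ∨ 2 ≤ #t := by have := ht.card_pos; omega
  · rw [ht1] at hsplit ht'
    omega
  · nlinarith

end Rel

section Part

variable {V ι : Type*} [Fintype V] [DecidableEq ι] {p : V → ι}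

def part (p : V → ι) (i : ι) : Finset V := {v | p v = i}

@[simp]
theorem mem_part {v : V} {i : ι} : v ∈ part p i ↔ p v = i := by simp [part]

theorem ncard_setOf_eq (i : ι) : {v | p v = i}.ncard = #(part p i) := by
  rw [Set.ncard_eq_toFinset_card', Set.toFinset_ofPred, part]

end Part

namespace SimpleGraph

variable {V : Type*} {G : SimpleGraph V} {p : V → Fin 3}

theorem hasC4Multi_of_cycle {a b c d : V} (hab : p a ≠ p b) (hac : p a ≠ p c) (hbc : p b ≠ p c)
    (hdb : p d = p b) (hbd : b ≠ d)
    (h₁ : G.Adj a b) (h₂ : G.Adj b c) (h₃ : G.Adj c d) (h₄ : G.Adj d a) : HasC4Multi G p := by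
  refine ⟨a, b, c, d, ne_of_apply_ne p hab, ne_of_apply_ne p hac, ne_of_apply_ne p (hdb ▸ hab),
    ne_of_apply_ne p hbc, hbd, ne_of_apply_ne p (hdb ▸ hbc.symm), h₁, h₂, h₃, h₄, fun i ↦ ?_⟩
  obtain rfl | rfl | rfl : i = p a ∨ i = p b ∨ i = p c := by omega
  all_goals simp

variable [Fintype V] [DecidableEq V] [DecidableRel G.Adj]

-- Every edge of a 3-partite graph is incident to `X` or joins `Y` to `Z`.
theorem card_edgeFinset_le_sum_degree_add_card_interedges
    (hpart : ∀ u v, G.Adj u v → p u ≠ p v) :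
    #G.edgeFinset ≤ ∑ x ∈ part p 0, G.degree x + #(G.interedges (part p 1) (part p 2)) := by
  set YZ := G.interedges (part p 1) (part p 2)
  have hcover : G.edgeFinset ⊆
      (part p 0).biUnion (G.incidenceFinset ·) ∪ YZ.image fun e ↦ s(e.1, e.2) := by
    intro e he
    induction e using Sym2.ind with
    | _ u v =>
      have huv : G.Adj u v := by simpa using he
      simp only [mem_union, mem_biUnion, mem_part, mem_image, YZ, mem_interedges_iff]
      by_cases hu : p u = 0
      · exact .inl ⟨u, hu, by rwa [mem_incidenceFinset, mem_incidenceSet]⟩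
      by_cases hv : p v = 0
      · exact .inl ⟨v, hv, by rwa [mem_incidenceFinset, Sym2.eq_swap, mem_incidenceSet, adj_comm]⟩
      have := hpart u v huv
      right
      rcases (by omega : (p u = 1 ∧ p v = 2) ∨ (p u = 2 ∧ p v = 1)) with ⟨hu, hv⟩ | ⟨hu, hv⟩
      · exact ⟨(u, v), ⟨hu, hv, huv⟩, rfl⟩
      · exact ⟨(v, u), ⟨hv, hu, huv.symm⟩, Sym2.eq_swap⟩
  calc #G.edgeFinset
      ≤ #((part p 0).biUnion (G.incidenceFinset ·)) + #(YZ.image fun e ↦ s(e.1, e.2)) :=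
        (card_le_card hcover).trans (card_union_le _ _)
    _ ≤ ∑ x ∈ part p 0, G.degree x + #YZ :=
        add_le_add (card_biUnion_le.trans_eq (sum_congr rfl fun x _ ↦
          G.card_incidenceFinset_eq_degree x)) card_image_le

theorem degree_eq_card_add_card (hpart : ∀ u v, G.Adj u v → p u ≠ p v) {x : V} (hx : p x = 0) :
    G.degree x = #(G.neighborFinset x ∩ part p 1) + #(G.neighborFinset x ∩ part p 2) := by
  have hdisj : Disjoint (G.neighborFinset x ∩ part p 1) (G.neighborFinset x ∩ part p 2) :=
    Finset.disjoint_left.2 fun v h₁ h₂ ↦ by simp_all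
  rw [← card_union_of_disjoint hdisj, ← inter_union_distrib_left, ← card_neighborFinset_eq_degree]
  congr 1
  ext v
  simp only [mem_inter, mem_union, mem_part, mem_neighborFinset, iff_self_and]
  intro hxv
  have := hpart x v hxv
  omega

def nonAdjNbrPairs (G : SimpleGraph V) [DecidableRel G.Adj] (p : V → Fin 3) (x : V) :
    Finset (V × V) :=
  Rel.interedges (fun y z ↦ ¬G.Adj y z)
    (G.neighborFinset x ∩ part p 1) (G.neighborFinset x ∩ part p 2)

theorem card_add_card_le_card_nonAdjNbrPairs_add_two (hfree : ¬HasC4Multi G p) {x : V}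
    (hx : p x = 0) (hY : (G.neighborFinset x ∩ part p 1).Nonempty)
    (hZ : (G.neighborFinset x ∩ part p 2).Nonempty) :
    #(G.neighborFinset x ∩ part p 1) + #(G.neighborFinset x ∩ part p 2) ≤
      #(G.nonAdjNbrPairs p x) + 2 := by
  refine Rel.card_add_card_le_card_interedges_compl_add_two hY hZ ?_ ?_
  · rintro ⟨y, z⟩ h ⟨_, z'⟩ h' (rfl : y = _)
    simp only [mem_coe, Rel.mem_interedges_iff, mem_inter, mem_neighborFinset, mem_part] at h h'
    obtain ⟨⟨-, hy⟩, ⟨hxz, hz⟩, hyz⟩ := h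
    obtain ⟨-, ⟨hxz', hz'⟩, hyz'⟩ := h'
    refine congrArg _ (by_contra fun hne ↦ hfree ?_)
    exact hasC4Multi_of_cycle (by simp [hx, hz]) (by simp [hx, hy]) (by simp [hy, hz])
      (hz'.trans hz.symm) hne hxz hyz.symm hyz' hxz'.symm
  · rintro ⟨y, z⟩ h ⟨y', _⟩ h' (rfl : z = _)
    simp only [mem_coe, Rel.mem_interedges_iff, mem_inter, mem_neighborFinset, mem_part] at h h'
    obtain ⟨⟨hxy, hy⟩, ⟨-, hz⟩, hyz⟩ := h
    obtain ⟨⟨hxy', hy'⟩, -, hyz'⟩ := h'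
    refine congrArg (·, z) (by_contra fun hne ↦ hfree ?_)
    exact hasC4Multi_of_cycle (by simp [hx, hy]) (by simp [hx, hz]) (by simp [hy, hz])
      (hy'.trans hy.symm) hne hxy hyz hyz'.symm hxy'.symm

theorem pairwiseDisjoint_nonAdjNbrPairs (hfree : ¬HasC4Multi G p) :
    (part p 0 : Set V).PairwiseDisjoint (G.nonAdjNbrPairs p) := by
  intro x hx x' hx' hne
  refine Finset.disjoint_left.2 fun ⟨y, z⟩ h h' ↦ hfree ?_
  simp only [nonAdjNbrPairs, Rel.mem_interedges_iff, mem_inter, mem_part,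
    mem_neighborFinset] at h h'
  rw [mem_coe, mem_part] at hx hx'
  obtain ⟨⟨hxy, hy⟩, ⟨hxz, hz⟩, -⟩ := h
  obtain ⟨⟨hx'y, -⟩, ⟨hx'z, -⟩, -⟩ := h'
  exact hasC4Multi_of_cycle (by simp [hx, hy]) (by simp [hy, hz]) (by simp [hx, hz])
    (hx'.trans hx.symm) hne hxy.symm hxz hx'z.symm hx'y

theorem nonAdjNbrPairs_subset (x : V) :
    G.nonAdjNbrPairs p x ⊆ Rel.interedges (fun y z ↦ ¬G.Adj y z) (part p 1) (part p 2) :=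
  Rel.interedges_mono inter_subset_right inter_subset_right

end SimpleGraph

open SimpleGraph in
theorem lemma1_i_general {V : Type*} [Fintype V] (G : SimpleGraph V) (p : V → Fin 3)
    (hpart : ∀ u v : V, G.Adj u v → p u ≠ p v)
    (hnbr : ∀ x : V, p x = 0 →
      (∃ y, G.Adj x y ∧ p y = 1) ∧ (∃ z, G.Adj x z ∧ p z = 2))
    (hfree : ¬ HasC4Multi G p) :
    G.edgeSet.ncard ≤
      {v | p v = 1}.ncard * {v | p v = 2}.ncard + 2 * {v | p v = 0}.ncard := by
  classical
  have hdegree : ∀ x ∈ part p 0, G.degree x ≤ #(G.nonAdjNbrPairs p x) + 2 := fun x hx ↦ by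
    rw [mem_part] at hx
    obtain ⟨⟨y, hxy, hy⟩, ⟨z, hxz, hz⟩⟩ := hnbr x hx
    rw [degree_eq_card_add_card hpart hx]
    exact card_add_card_le_card_nonAdjNbrPairs_add_two hfree hx
      ⟨y, mem_inter.2 ⟨(G.mem_neighborFinset x y).2 hxy, mem_part.2 hy⟩⟩
      ⟨z, mem_inter.2 ⟨(G.mem_neighborFinset x z).2 hxz, mem_part.2 hz⟩⟩
  have hnonAdj : ∑ x ∈ part p 0, #(G.nonAdjNbrPairs p x) ≤
      #(Rel.interedges (fun y z ↦ ¬G.Adj y z) (part p 1) (part p 2)) := by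
    rw [← card_biUnion (pairwiseDisjoint_nonAdjNbrPairs hfree)]
    exact card_le_card (biUnion_subset.2 fun x _ ↦ nonAdjNbrPairs_subset x)
  rw [← coe_edgeFinset, Set.ncard_coe_finset, ncard_setOf_eq, ncard_setOf_eq, ncard_setOf_eq,
    ← Rel.card_interedges_add_card_interedges_compl G.Adj]
  calc #G.edgeFinset
      ≤ ∑ x ∈ part p 0, G.degree x + #(G.interedges (part p 1) (part p 2)) :=
        card_edgeFinset_le_sum_degree_add_card_interedges hpart
    _ ≤ ∑ x ∈ part p 0, (#(G.nonAdjNbrPairs p x) + 2) +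
          #(G.interedges (part p 1) (part p 2)) := by
        gcongr with x hx
        exact hdegree x hx
    _ ≤ _ := by
        rw [sum_add_distrib, sum_const, smul_eq_mul]
        unfold SimpleGraph.interedges
        omega

/-- Lemma 1(i): if every vertex of the part `X = p⁻¹(0)` has a neighbor in
`Y = p⁻¹(1)` and a neighbor in `Z = p⁻¹(2)`, and `G` has no multipartite 4-cycle, then
`e(G) ≤ |Y|·|Z| + 2·|X|`. -/
theorem lemma1_i {V : Type*} [Fintype V] (G : SimpleGraph V) (p : V → Fin 3)
    (hpart : ∀ u v : V, G.Adj u v → p u ≠ p v)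
    (hX : ∃ v, p v = 0) (hY : ∃ v, p v = 1) (hZ : ∃ v, p v = 2)
    (hnbr : ∀ x : V, p x = 0 →
      (∃ y, G.Adj x y ∧ p y = 1) ∧ (∃ z, G.Adj x z ∧ p z = 2))
    (hfree : ¬ HasC4Multi G p) :
    G.edgeSet.ncard ≤
      {v | p v = 1}.ncard * {v | p v = 2}.ncard + 2 * {v | p v = 0}.ncard :=
  lemma1_i_general G p hpart hnbr hfree
end

section
/- Let G be a 3-partite graph with nonempty vertex parts X, Y, Z such that every vertex x in X has at least one neighbor in Y and at least one neighbor in Z. If G contains no triangle and no multipartite 4-cycle, then e(G) ≤ |Y|·|Z| + |X|. -/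
open Finset

namespace SimpleGraph

variable {V : Type*} [Fintype V] (G : SimpleGraph V) [DecidableRel G.Adj]

theorem card_edgeFinset_le_card_interedges_add_sum_degree (p : V → Fin 3)
    (hpart : ∀ u v, G.Adj u v → p u ≠ p v) :
    #G.edgeFinset ≤
      #(G.interedges {v | p v = 1} {v | p v = 2}) + ∑ x with p x = 0, G.degree x := by
  let f : (V × V) ⊕ (Σ _ : V, V) → Sym2 V :=
    Sum.elim (fun q => s(q.1, q.2)) (fun d => s(d.1, d.2))
  have hsurj : Set.SurjOn f ((G.interedges {v | p v = 1} {v | p v = 2}).disjSum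
      (({x | p x = 0} : Finset V).sigma fun x => G.neighborFinset x)) G.edgeFinset := by
    intro e he
    induction e with | _ u v => ?_
    rw [coe_edgeFinset, mem_edgeSet] at he
    wlog huv : p u < p v generalizing u v
    · rw [Sym2.eq_swap]
      exact this v u he.symm (lt_of_le_of_ne (not_lt.1 huv) (hpart v u he.symm))
    by_cases hu : p u = 0
    · exact ⟨Sum.inr ⟨u, v⟩, by simp [hu, he], rfl⟩
    · exact ⟨Sum.inl (u, v), by simp [mk_mem_interedges_iff, he]; omega, rfl⟩
  calc #G.edgeFinset ≤ _ := card_le_card_of_surjOn f hsurj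
    _ = _ := by simp [card_sigma]

variable [DecidableEq V]

def neighborRect (s t : Finset V) (x : V) : Finset (V × V) :=
  (G.neighborFinset x ∩ s) ×ˢ (G.neighborFinset x ∩ t)

theorem degree_le_card_neighborRect_add_one {s t : Finset V} {x : V}
    (hst : G.neighborFinset x ⊆ s ∪ t) (hs : (G.neighborFinset x ∩ s).Nonempty)
    (ht : (G.neighborFinset x ∩ t).Nonempty) :
    G.degree x ≤ #(G.neighborRect s t x) + 1 := by
  have hcover :
      G.neighborFinset x ⊆ (G.neighborFinset x ∩ s) ∪ (G.neighborFinset x ∩ t) := by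
    rw [← inter_union_distrib_left]
    exact subset_inter subset_rfl hst
  have hs₁ := hs.card_pos
  have ht₁ := ht.card_pos
  calc G.degree x = #(G.neighborFinset x) := (card_neighborFinset_eq_degree G x).symm
    _ ≤ #(G.neighborFinset x ∩ s) + #(G.neighborFinset x ∩ t) :=
      (card_le_card hcover).trans (card_union_le _ _)
    _ ≤ #(G.neighborFinset x ∩ s) * #(G.neighborFinset x ∩ t) + 1 := by nlinarith
    _ = #(G.neighborRect s t x) + 1 := by rw [neighborRect, card_product]

theorem disjoint_interedges_neighborRect (hG : G.CliqueFree 3) (s t : Finset V) (x : V) :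
    Disjoint (G.interedges s t) (G.neighborRect s t x) := by
  rw [Finset.disjoint_left]
  rintro ⟨y, z⟩ hyz hxyz
  rw [mk_mem_interedges_iff] at hyz
  simp only [neighborRect, mem_product, mem_inter, mem_neighborFinset] at hxyz
  exact hG {x, y, z} (is3Clique_triple_iff.2 ⟨hxyz.1.1, hxyz.2.1, hyz.2.2⟩)

theorem disjoint_neighborRect_of_not_hasC4Multi {p : V → Fin 3} (hG : ¬HasC4Multi G p)
    {x x' : V} (hx : p x = 0) (hne : x ≠ x') :
    Disjoint (G.neighborRect {v | p v = 1} {v | p v = 2} x)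
      (G.neighborRect {v | p v = 1} {v | p v = 2} x') := by
  rw [Finset.disjoint_left]
  rintro ⟨y, z⟩ h h'
  simp only [neighborRect, mem_product, mem_inter, mem_neighborFinset, mem_filter,
    mem_univ, true_and] at h h'
  obtain ⟨⟨hxy, hy⟩, hxz, hz⟩ := h
  obtain ⟨⟨hx'y, -⟩, hx'z, -⟩ := h'
  refine hG ⟨x, y, x', z, hxy.ne, hne, hxz.ne, hx'y.ne', ne_of_apply_ne p (by simp [hy, hz]),
    hx'z.ne, hxy, hx'y.symm, hx'z, hxz.symm, fun i => ?_⟩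
  fin_cases i
  · exact ⟨x, by simp, hx⟩
  · exact ⟨y, by simp, hy⟩
  · exact ⟨z, by simp, hz⟩

theorem card_interedges_add_sum_card_neighborRect_le (hG : G.CliqueFree 3) {s t X : Finset V}
    (hX : (X : Set V).PairwiseDisjoint (G.neighborRect s t)) :
    #(G.interedges s t) + ∑ x ∈ X, #(G.neighborRect s t x) ≤ #s * #t := by
  rw [← card_biUnion hX, ← card_union_of_disjoint
    ((disjoint_biUnion_right _ _ _).2 fun x _ => G.disjoint_interedges_neighborRect hG s t x),
    ← card_product]
  refine card_le_card (union_subset (filter_subset _ _) (biUnion_subset.2 fun x _ => ?_))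
  exact product_subset_product inter_subset_right inter_subset_right

end SimpleGraph

open SimpleGraph in
theorem lemma1_ii_general {V : Type*} [Fintype V] (G : SimpleGraph V) (p : V → Fin 3)
    (hpart : ∀ u v : V, G.Adj u v → p u ≠ p v)
    (hnbr : ∀ x : V, p x = 0 →
      (∃ y, G.Adj x y ∧ p y = 1) ∧ (∃ z, G.Adj x z ∧ p z = 2))
    (htri : G.CliqueFree 3) (hfree : ¬ HasC4Multi G p) :
    G.edgeSet.ncard ≤
      {v | p v = 1}.ncard * {v | p v = 2}.ncard + {v | p v = 0}.ncard := by
  classical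
  set X : Finset V := {v | p v = 0}
  set Y : Finset V := {v | p v = 1}
  set Z : Finset V := {v | p v = 2}
  have hdeg : ∀ x ∈ X, G.degree x ≤ #(G.neighborRect Y Z x) + 1 := by
    intro x hx
    rw [mem_filter] at hx
    obtain ⟨⟨y, hxy, hy⟩, z, hxz, hz⟩ := hnbr x hx.2
    refine G.degree_le_card_neighborRect_add_one (fun v hv => ?_)
      ⟨y, by simp [Y, hxy, hy]⟩ ⟨z, by simp [Z, hxz, hz]⟩
    have := hpart x v ((mem_neighborFinset ..).1 hv)
    simp only [Y, Z, mem_union, mem_filter, mem_univ, true_and]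
    omega
  have hpack : #(G.interedges Y Z) + ∑ x ∈ X, #(G.neighborRect Y Z x) ≤ #Y * #Z :=
    G.card_interedges_add_sum_card_neighborRect_le htri fun x hx x' _ hne =>
      G.disjoint_neighborRect_of_not_hasC4Multi hfree (mem_filter.1 hx).2 hne
  calc G.edgeSet.ncard = #G.edgeFinset := by rw [← coe_edgeFinset, Set.ncard_coe_finset]
    _ ≤ #(G.interedges Y Z) + ∑ x ∈ X, G.degree x :=
      G.card_edgeFinset_le_card_interedges_add_sum_degree p hpart
    _ ≤ #(G.interedges Y Z) + ∑ x ∈ X, (#(G.neighborRect Y Z x) + 1) := by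
      gcongr with x hx
      exact hdeg x hx
    _ = #(G.interedges Y Z) + ∑ x ∈ X, #(G.neighborRect Y Z x) + #X := by
      rw [sum_add_distrib, card_eq_sum_ones X]
      ring
    _ ≤ #Y * #Z + #X := by gcongr
    _ = _ := by simp [X, Y, Z, Set.ncard_eq_toFinset_card']

/-- Lemma 1(ii): if every vertex of the part `X = p⁻¹(0)` has a neighbor in
`Y = p⁻¹(1)` and a neighbor in `Z = p⁻¹(2)`, and `G` has no triangle and no multipartite
4-cycle, then `e(G) ≤ |Y|·|Z| + |X|`. -/
theorem lemma1_ii {V : Type*} [Fintype V] (G : SimpleGraph V) (p : V → Fin 3)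
    (hpart : ∀ u v : V, G.Adj u v → p u ≠ p v)
    (hX : ∃ v, p v = 0) (hY : ∃ v, p v = 1) (hZ : ∃ v, p v = 2)
    (hnbr : ∀ x : V, p x = 0 →
      (∃ y, G.Adj x y ∧ p y = 1) ∧ (∃ z, G.Adj x z ∧ p z = 2))
    (htri : G.CliqueFree 3) (hfree : ¬ HasC4Multi G p) :
    G.edgeSet.ncard ≤
      {v | p v = 1}.ncard * {v | p v = 2}.ncard + {v | p v = 0}.ncard :=
  lemma1_ii_general G p hpart hnbr htri hfree
end

section
/- Let G be a 3-partite graph with vertex parts X, Y, Z that contains no multipartite 4-cycle, and let x be a vertex in X. Then in the subgraph of G induced on the neighborhood N(x) of x, every vertex has degree at most 1; consequently the number of edges of G joining N(x) ∩ Y to N(x) ∩ Z is at most min(|N(x) ∩ Y|, |N(x) ∩ Z|). -/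
/-! Two common neighbours `z ≠ w` of the endpoints of an edge `xy` give the 4-cycle
`x z y w` with chord `xy`; the triangle `x z y` already meets all three parts, so `N(x)`
induces a graph of maximum degree at most one, and the `Y`–`Z` edges inside `N(x)` form a
matching. -/

theorem Fin.eq_or_eq_or_eq_of_pairwise_ne {a b c : Fin 3} (hab : a ≠ b) (hac : a ≠ c)
    (hbc : b ≠ c) (i : Fin 3) : i = a ∨ i = b ∨ i = c := by
  revert a b c i
  decide

section

variable {V : Type*} {G : SimpleGraph V} {p : V → Fin 3}

theorem hasC4Multi_of_cycle_of_adj (hpart : ∀ u v : V, G.Adj u v → p u ≠ p v) {a b c d : V}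
    (hbd : b ≠ d) (hab : G.Adj a b) (hbc : G.Adj b c) (hcd : G.Adj c d) (hda : G.Adj d a)
    (hac : G.Adj a c) : HasC4Multi G p := by
  refine ⟨a, b, c, d, hab.ne, hac.ne, hda.ne', hbc.ne, hbd, hcd.ne, hab, hbc, hcd, hda,
    fun i => ?_⟩
  rcases Fin.eq_or_eq_or_eq_of_pairwise_ne (hpart a b hab) (hpart a c hac) (hpart b c hbc) i
    with rfl | rfl | rfl
  · exact ⟨a, by simp, rfl⟩
  · exact ⟨b, by simp, rfl⟩
  · exact ⟨c, by simp, rfl⟩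

theorem commonNeighbors_subsingleton_of_not_hasC4Multi
    (hpart : ∀ u v : V, G.Adj u v → p u ≠ p v) (hfree : ¬ HasC4Multi G p) {x y : V}
    (hxy : G.Adj x y) : (G.commonNeighbors x y).Subsingleton :=
  fun _ hz _ hw => by_contra fun hzw =>
    hfree (hasC4Multi_of_cycle_of_adj hpart hzw hz.1 hz.2.symm hw.2 hw.1.symm hxy)

end

theorem nbhd_induced_max_degree_le_one_general {V : Type*} [Fintype V] (G : SimpleGraph V)
    (p : V → Fin 3) (hpart : ∀ u v : V, G.Adj u v → p u ≠ p v)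
    (hfree : ¬ HasC4Multi G p) (x : V) :
    (∀ y : V, G.Adj x y → {z | G.Adj x z ∧ G.Adj y z}.ncard ≤ 1) ∧
    {q : V × V | G.Adj x q.1 ∧ p q.1 = 1 ∧ G.Adj x q.2 ∧ p q.2 = 2 ∧ G.Adj q.1 q.2}.ncard ≤
      min {y | G.Adj x y ∧ p y = 1}.ncard {z | G.Adj x z ∧ p z = 2}.ncard := by
  have hcommon : ∀ y, G.Adj x y → (G.commonNeighbors x y).Subsingleton :=
    fun _ hxy => commonNeighbors_subsingleton_of_not_hasC4Multi hpart hfree hxy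
  refine ⟨fun y hxy => Set.ncard_le_one_iff_subsingleton.mpr (hcommon y hxy), le_min ?_ ?_⟩
  · refine Set.ncard_le_ncard_of_injOn Prod.fst (fun q hq => ⟨hq.1, hq.2.1⟩) ?_
    rintro ⟨y, z⟩ ⟨hy, -, hz, -, hyz⟩ ⟨_, z'⟩ ⟨-, -, hz', -, hyz'⟩ (rfl : y = _)
    exact Prod.ext rfl (hcommon y hy ⟨hz, hyz⟩ ⟨hz', hyz'⟩)
  · refine Set.ncard_le_ncard_of_injOn Prod.snd (fun q hq => ⟨hq.2.2.1, hq.2.2.2.1⟩) ?_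
    rintro ⟨y, z⟩ ⟨hy, -, hz, -, hyz⟩ ⟨y', _⟩ ⟨hy', -, -, -, hyz'⟩ (rfl : z = _)
    exact Prod.ext (hcommon z hz ⟨hy, hyz.symm⟩ ⟨hy', hyz'.symm⟩) rfl

/-- in a `C4^multi`-free 3-partite graph, for a vertex `x` of the part
`X = p⁻¹(0)`, the subgraph induced on `N(x)` has maximum degree at most 1; consequently
the number of edges joining `N(x) ∩ Y` to `N(x) ∩ Z` is at most
`min (|N(x) ∩ Y|) (|N(x) ∩ Z|)`. -/
theorem nbhd_induced_max_degree_le_one {V : Type*} [Fintype V] (G : SimpleGraph V)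
    (p : V → Fin 3) (hpart : ∀ u v : V, G.Adj u v → p u ≠ p v)
    (hfree : ¬ HasC4Multi G p) (x : V) (hx : p x = 0) :
    (∀ y : V, G.Adj x y → {z | G.Adj x z ∧ G.Adj y z}.ncard ≤ 1) ∧
    {q : V × V | G.Adj x q.1 ∧ p q.1 = 1 ∧ G.Adj x q.2 ∧ p q.2 = 2 ∧ G.Adj q.1 q.2}.ncard ≤
      min {y | G.Adj x y ∧ p y = 1}.ncard {z | G.Adj x z ∧ p z = 2}.ncard :=
  nbhd_induced_max_degree_le_one_general G p hpart hfree x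
end

section
/- Let K_{n1,n2,n3} with n1 ≥ n2 ≥ n3 ≥ 1 be edge-colored. Suppose there exist two triangles T1 and T2 of K_{n1,n2,n3} sharing exactly one common vertex such that the six edges of T1 ∪ T2 receive pairwise distinct colors. Then the coloring contains a rainbow multipartite 4-cycle. -/
/-!
Let `x` be the common vertex of the triangles `x u v` and `x u' v'`. As `u'` and `v'` lie in
different parts, `u` lies in a different part from one of them, say `v'`, so `u v'` is an edge.
It closes two 4-cycles, `x u' v' u` and `x v u v'`; each contains a triangle path through all
three parts, and each consists of `u v'` and three edges of the bowtie, the two triples being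
disjoint. The color of `u v'` repeats at most one of the six distinct bowtie colors, so one of
the two cycles is rainbow.
-/

lemma Set.notMem_of_inter_eq_singleton {α : Type*} {s t : Set α} {x y : α}
    (h : s ∩ t = {x}) (hy : y ∈ s) (hyx : y ≠ x) : y ∉ t :=
  fun ht => hyx (h.subset ⟨hy, ht⟩)

lemma pairwise_ne_or_pairwise_ne {α : Type*} {x₁ x₂ x₃ y₁ y₂ y₃ : α}
    (h : [x₁, x₂, x₃, y₁, y₂, y₃].Pairwise (· ≠ ·)) (k : α) :
    [y₁, y₂, k, x₁].Pairwise (· ≠ ·) ∨ [x₃, x₂, k, y₃].Pairwise (· ≠ ·) := by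
  simp only [List.pairwise_cons, List.mem_cons, List.not_mem_nil, or_false,
    forall_eq_or_imp, forall_eq, List.Pairwise.nil] at h ⊢
  by_cases hk : k = y₁ ∨ k = y₂ ∨ k = x₁
  · rcases hk with rfl | rfl | rfl <;> tauto
  · tauto

lemma Fin.three_eq_or_eq_or_eq {i j k : Fin 3} (hij : i ≠ j) (hik : i ≠ k) (hjk : j ≠ k)
    (l : Fin 3) : l = i ∨ l = j ∨ l = k := by
  revert i j k l
  decide

section Bowtie

variable {V : Type*} {G : SimpleGraph V} {p : V → Fin 3} {c : Sym2 V → ℕ}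

def triangleColors (c : Sym2 V → ℕ) (a b d : V) : List ℕ :=
  [c s(a, b), c s(b, d), c s(a, d)]

lemma triangleColors_swap₁₂ (a b d : V) :
    (triangleColors c b a d).Perm (triangleColors c a b d) := by
  rw [triangleColors, triangleColors, Sym2.eq_swap (a := b)]
  exact List.Perm.cons _ (List.Perm.swap _ _ _)

lemma triangleColors_swap₂₃ (a b d : V) :
    (triangleColors c a d b).Perm (triangleColors c a b d) := by
  rw [triangleColors, triangleColors, Sym2.eq_swap (a := d)]
  exact List.reverse_perm [c s(a, b), c s(b, d), c s(a, d)]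

lemma exists_triangle_relabel {a b d x : V}
    (hT : G.Adj a b ∧ G.Adj b d ∧ G.Adj a d) (hx : x ∈ ({a, b, d} : Set V)) :
    ∃ u v, ({x, u, v} : Set V) = {a, b, d} ∧ (G.Adj x u ∧ G.Adj u v ∧ G.Adj x v) ∧
      (triangleColors c x u v).Perm (triangleColors c a b d) := by
  obtain ⟨hab, hbd, had⟩ := hT
  rcases hx with rfl | rfl | rfl
  · exact ⟨b, d, rfl, ⟨hab, hbd, had⟩, List.Perm.refl _⟩
  · exact ⟨a, d, Set.insert_comm _ _ _, ⟨hab.symm, had, hbd⟩, triangleColors_swap₁₂ _ _ _⟩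
  · refine ⟨a, b, ?_, ⟨had.symm, hab, hbd.symm⟩,
      (triangleColors_swap₁₂ _ _ _).trans (triangleColors_swap₂₃ _ _ _)⟩
    ext
    simp only [Set.mem_insert_iff, Set.mem_singleton_iff]
    tauto

lemma hasRainbowC4Multi_of_cycle (hp : ∀ u v, G.Adj u v → p u ≠ p v) {a b d e : V}
    (hab : G.Adj a b) (hbd : G.Adj b d) (hde : G.Adj d e) (hea : G.Adj e a)
    (had : G.Adj a d) (hbe : b ≠ e)
    (hc : [c s(a, b), c s(b, d), c s(d, e), c s(e, a)].Pairwise (· ≠ ·)) :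
    HasRainbowC4Multi G p c := by
  refine ⟨a, b, d, e, hab.ne, had.ne, hea.ne.symm, hbd.ne, hbe, hde.ne,
    hab, hbd, hde, hea, fun i => ?_, hc⟩
  rcases Fin.three_eq_or_eq_or_eq (hp _ _ hab) (hp _ _ had) (hp _ _ hbd) i with rfl | rfl | rfl
  · exact ⟨a, by simp, rfl⟩
  · exact ⟨b, by simp, rfl⟩
  · exact ⟨d, by simp, rfl⟩

lemma hasRainbowC4Multi_of_bowtie_of_adj (hp : ∀ u v, G.Adj u v → p u ≠ p v)
    {x u v u' v' : V} (hT : G.Adj x u ∧ G.Adj u v ∧ G.Adj x v)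
    (hT' : G.Adj x u' ∧ G.Adj u' v' ∧ G.Adj x v') (huv' : G.Adj u v')
    (huu' : u ≠ u') (hvv' : v ≠ v')
    (hc : (triangleColors c x u v ++ triangleColors c x u' v').Pairwise (· ≠ ·)) :
    HasRainbowC4Multi G p c := by
  obtain ⟨hxu, huv, hxv⟩ := hT
  obtain ⟨hxu', hu'v', hxv'⟩ := hT'
  rcases pairwise_ne_or_pairwise_ne hc (c s(u, v')) with hA | hB
  · refine hasRainbowC4Multi_of_cycle hp hxu' hu'v' huv'.symm hxu.symm hxv' huu'.symm ?_
    rwa [show s(v', u) = s(u, v') from Sym2.eq_swap, show s(u, x) = s(x, u) from Sym2.eq_swap]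
  · refine hasRainbowC4Multi_of_cycle hp hxv huv.symm huv' hxv'.symm hxu hvv' ?_
    rwa [show s(v, u) = s(u, v) from Sym2.eq_swap, show s(v', x) = s(x, v') from Sym2.eq_swap]

lemma hasRainbowC4Multi_of_bowtie (hG : ∀ u v, G.Adj u v ↔ p u ≠ p v) {x u v u' v' : V}
    (hT : G.Adj x u ∧ G.Adj u v ∧ G.Adj x v) (hT' : G.Adj x u' ∧ G.Adj u' v' ∧ G.Adj x v')
    (huu' : u ≠ u') (huv' : u ≠ v') (hvu' : v ≠ u') (hvv' : v ≠ v')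
    (hc : (triangleColors c x u v ++ triangleColors c x u' v').Pairwise (· ≠ ·)) :
    HasRainbowC4Multi G p c := by
  have hp : ∀ u v, G.Adj u v → p u ≠ p v := fun u v => (hG u v).1
  by_cases hpu : p u = p v'
  · obtain ⟨hxu', hu'v', hxv'⟩ := hT'
    have huu'_adj : G.Adj u u' := (hG _ _).2 (hpu ▸ ((hG _ _).1 hu'v').symm)
    refine hasRainbowC4Multi_of_bowtie_of_adj hp hT ⟨hxv', hu'v'.symm, hxu'⟩ huu'_adj huv' hvu'
      ?_
    exact ((List.Perm.refl _).append (triangleColors_swap₂₃ _ _ _)).pairwise_iff Ne.symm |>.2 hc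
  · exact hasRainbowC4Multi_of_bowtie_of_adj hp hT hT' ((hG _ _).2 hpu) huu' hvv' hc

end Bowtie

theorem rainbow_of_bowtie_general (n1 n2 n3 : ℕ)
    (c : Sym2 (Fin n1 ⊕ Fin n2 ⊕ Fin n3) → ℕ)
    (a b d a' b' d' : Fin n1 ⊕ Fin n2 ⊕ Fin n3)
    (hT1 : (triK n1 n2 n3).Adj a b ∧ (triK n1 n2 n3).Adj b d ∧ (triK n1 n2 n3).Adj a d)
    (hT2 : (triK n1 n2 n3).Adj a' b' ∧ (triK n1 n2 n3).Adj b' d' ∧ (triK n1 n2 n3).Adj a' d')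
    (hshare : (({a, b, d} : Set (Fin n1 ⊕ Fin n2 ⊕ Fin n3)) ∩ {a', b', d'}).ncard = 1)
    (hrb : List.Pairwise (· ≠ ·)
      [c s(a, b), c s(b, d), c s(a, d), c s(a', b'), c s(b', d'), c s(a', d')]) :
    HasRainbowC4Multi (triK n1 n2 n3) triPart c := by
  obtain ⟨x, hx⟩ := Set.ncard_eq_one.1 hshare
  have hx_mem : x ∈ ({a, b, d} : Set _) ∩ {a', b', d'} := hx ▸ rfl
  obtain ⟨u, v, hS, hT, hperm⟩ := exists_triangle_relabel (c := c) hT1 hx_mem.1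
  obtain ⟨u', v', hS', hT', hperm'⟩ := exists_triangle_relabel (c := c) hT2 hx_mem.2
  rw [← hS, ← hS'] at hx
  have hu := Set.notMem_of_inter_eq_singleton hx (by simp) hT.1.ne.symm
  have hv := Set.notMem_of_inter_eq_singleton hx (by simp) hT.2.2.ne.symm
  simp only [Set.mem_insert_iff, Set.mem_singleton_iff, not_or] at hu hv
  refine hasRainbowC4Multi_of_bowtie (fun _ _ => Iff.rfl) hT hT' hu.2.1 hu.2.2 hv.2.1 hv.2.2 ?_
  exact (hperm.append hperm').pairwise_iff Ne.symm |>.2 hrb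

/-- if an edge-coloring of `K_{n1,n2,n3}` contains two triangles sharing
exactly one common vertex whose six edges receive pairwise distinct colors, then it
contains a rainbow multipartite 4-cycle. -/
theorem rainbow_of_bowtie (n1 n2 n3 : ℕ) (h12 : n2 ≤ n1) (h23 : n3 ≤ n2) (h3 : 1 ≤ n3)
    (c : Sym2 (Fin n1 ⊕ Fin n2 ⊕ Fin n3) → ℕ)
    (a b d a' b' d' : Fin n1 ⊕ Fin n2 ⊕ Fin n3)
    (hT1 : (triK n1 n2 n3).Adj a b ∧ (triK n1 n2 n3).Adj b d ∧ (triK n1 n2 n3).Adj a d)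
    (hT2 : (triK n1 n2 n3).Adj a' b' ∧ (triK n1 n2 n3).Adj b' d' ∧ (triK n1 n2 n3).Adj a' d')
    (hshare : (({a, b, d} : Set (Fin n1 ⊕ Fin n2 ⊕ Fin n3)) ∩ {a', b', d'}).ncard = 1)
    (hrb : List.Pairwise (· ≠ ·)
      [c s(a, b), c s(b, d), c s(a, d), c s(a', b'), c s(b', d'), c s(a', d')]) :
    HasRainbowC4Multi (triK n1 n2 n3) triPart c :=
  rainbow_of_bowtie_general n1 n2 n3 c a b d a' b' d' hT1 hT2 hshare hrb
end

section
/- Let K_{n1,n2,n3} with n1 ≥ n2 ≥ n3 ≥ 1 be edge-colored. Suppose there is a 6-cycle C in K_{n1,n2,n3} whose vertex set meets all three parts, whose six edges receive pairwise distinct colors, and which is non-cyclic, i.e., some vertex of C has both of its neighbors on C lying in the same part. Then the coloring contains a rainbow multipartite 4-cycle. -/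
/-! A diagonal `v j — v (j + 3)` joining different parts splits the 6-cycle into two 4-cycles;
for a non-cyclic multipartite 6-cycle some such diagonal makes both of them multipartite (a
finite check over the part patterns). The six cycle colours being distinct, the colour of the
diagonal repeats a colour of at most one of the two halves, and the other half closed up by the
diagonal is a rainbow multipartite 4-cycle. -/

open Function

lemma Function.Injective.forall_ne_or_forall_ne {α β : Type*} {f : α → β} (hf : Injective f)
    {s t : Finset α} (hst : Disjoint s t) (x : β) : (∀ a ∈ s, f a ≠ x) ∨ ∀ a ∈ t, f a ≠ x := by
  by_contra! h
  obtain ⟨⟨a, ha, rfl⟩, b, hb, hba⟩ := h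
  exact Finset.disjoint_left.mp hst ha (hf hba ▸ hb)

lemma exists_splitting_diagonal (q : Fin 6 → Fin 3) (hproper : ∀ j, q j ≠ q (j + 1))
    (hsurj : ∀ i, ∃ j, q j = i) (hnc : ∃ j, q (j - 1) = q (j + 1)) :
    ∃ j, q (0 + j) ≠ q (3 + j) ∧
      (∀ i, ∃ k ∈ ({0, 1, 2, 3} : Finset (Fin 6)), q (k + j) = i) ∧
      (∀ i, ∃ k ∈ ({0, 1, 2, 3} : Finset (Fin 6)), q (k + 3 + j) = i) := by
  revert q
  set_option maxRecDepth 10000 in decide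

section RainbowCycle

variable {V : Type*} {G : SimpleGraph V} {p : V → Fin 3} {c : Sym2 V → ℕ}

structure IsRainbowCycle (G : SimpleGraph V) (c : Sym2 V → ℕ) {n : ℕ} [NeZero n]
    (w : Fin n → V) : Prop where
  injective : Injective w
  adj : ∀ j, G.Adj (w j) (w (j + 1))
  color_injective : Injective fun j => c s(w j, w (j + 1))

lemma IsRainbowCycle.rotate {n : ℕ} [NeZero n] {w : Fin n → V} (hw : IsRainbowCycle G c w)
    (j : Fin n) : IsRainbowCycle G c fun k => w (k + j) where
  injective := hw.injective.comp (add_left_injective j)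
  adj k := by simpa only [add_right_comm k 1 j] using hw.adj (k + j)
  color_injective := by
    simp only [add_right_comm _ 1 j]
    exact hw.color_injective.comp (add_left_injective j)

lemma IsRainbowCycle.hasRainbowC4Multi_of_diagonal_color_ne {w : Fin 6 → V} (hw : IsRainbowCycle G c w)
    (hdiag : G.Adj (w 3) (w 0))
    (hmulti : ∀ i, ∃ k ∈ ({0, 1, 2, 3} : Finset (Fin 6)), p (w k) = i)
    (havoid : ∀ k ∈ ({0, 1, 2} : Finset (Fin 6)), c s(w k, w (k + 1)) ≠ c s(w 3, w 0)) :
    HasRainbowC4Multi G p c := by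
  have hcol (a b : Fin 6) (hab : a ≠ b) : c s(w a, w (a + 1)) ≠ c s(w b, w (b + 1)) :=
    hw.color_injective.ne hab
  refine ⟨w 0, w 1, w 2, w 3, hw.injective.ne (by decide), hw.injective.ne (by decide),
    hw.injective.ne (by decide), hw.injective.ne (by decide), hw.injective.ne (by decide),
    hw.injective.ne (by decide), hw.adj 0, hw.adj 1, hw.adj 2, hdiag, fun i => ?_, ?_⟩
  · obtain ⟨k, hk, rfl⟩ := hmulti i
    refine ⟨w k, ?_, rfl⟩
    simp only [Finset.mem_insert, Finset.mem_singleton] at hk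
    rcases hk with rfl | rfl | rfl | rfl <;> simp
  · simp only [List.pairwise_cons, List.mem_cons, List.not_mem_nil, or_false, forall_eq_or_imp,
      forall_eq, List.Pairwise.nil, IsEmpty.forall_iff, forall_const, and_true]
    exact ⟨⟨hcol 0 1 (by decide), hcol 0 2 (by decide), havoid 0 (by simp)⟩,
      ⟨hcol 1 2 (by decide), havoid 1 (by simp)⟩, havoid 2 (by simp)⟩

lemma IsRainbowCycle.hasRainbowC4Multi_of_diagonal {w : Fin 6 → V} (hw : IsRainbowCycle G c w)
    (hdiag : G.Adj (w 0) (w 3))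
    (hfirst : ∀ i, ∃ k ∈ ({0, 1, 2, 3} : Finset (Fin 6)), p (w k) = i)
    (hsecond : ∀ i, ∃ k ∈ ({0, 1, 2, 3} : Finset (Fin 6)), p (w (k + 3)) = i) :
    HasRainbowC4Multi G p c := by
  rcases hw.color_injective.forall_ne_or_forall_ne (s := {0, 1, 2})
    (t := ({0, 1, 2} : Finset (Fin 6)).image (· + 3)) (by decide) (c s(w 3, w 0)) with hfirst_avoids | hsecond_avoids
  · exact hw.hasRainbowC4Multi_of_diagonal_color_ne hdiag.symm hfirst hfirst_avoids
  · refine (hw.rotate 3).hasRainbowC4Multi_of_diagonal_color_ne hdiag hsecond fun l hl => ?_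
    have hswap : s(w (3 + 3), w (0 + 3)) = s(w 3, w 0) := Sym2.eq_swap
    rw [hswap, add_right_comm l 1 3]
    exact hsecond_avoids (l + 3) (Finset.mem_image_of_mem (· + 3) hl)

end RainbowCycle

theorem rainbow_of_noncyclic_C6_general (n1 n2 n3 : ℕ)
    (c : Sym2 (Fin n1 ⊕ Fin n2 ⊕ Fin n3) → ℕ)
    (v : Fin 6 → Fin n1 ⊕ Fin n2 ⊕ Fin n3)
    (hinj : Function.Injective v)
    (hadj : ∀ j : Fin 6, (triK n1 n2 n3).Adj (v j) (v (j + 1)))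
    (hmulti : ∀ i : Fin 3, ∃ j : Fin 6, triPart (v j) = i)
    (hrb : ∀ j k : Fin 6, c s(v j, v (j + 1)) = c s(v k, v (k + 1)) → j = k)
    (hnc : ∃ j : Fin 6, triPart (v (j - 1)) = triPart (v (j + 1))) :
    HasRainbowC4Multi (triK n1 n2 n3) triPart c := by
  have hv : IsRainbowCycle (triK n1 n2 n3) c v := ⟨hinj, hadj, hrb⟩
  obtain ⟨j, hdiag, hfirst, hsecond⟩ := exists_splitting_diagonal (triPart ∘ v) hadj hmulti hnc
  exact (hv.rotate j).hasRainbowC4Multi_of_diagonal hdiag hfirst hsecond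

/-- if an edge-coloring of `K_{n1,n2,n3}` contains a rainbow non-cyclic
multipartite 6-cycle, then it contains a rainbow multipartite 4-cycle. -/
theorem rainbow_of_noncyclic_C6 (n1 n2 n3 : ℕ) (h12 : n2 ≤ n1) (h23 : n3 ≤ n2) (h3 : 1 ≤ n3)
    (c : Sym2 (Fin n1 ⊕ Fin n2 ⊕ Fin n3) → ℕ)
    (v : Fin 6 → Fin n1 ⊕ Fin n2 ⊕ Fin n3)
    (hinj : Function.Injective v)
    (hadj : ∀ j : Fin 6, (triK n1 n2 n3).Adj (v j) (v (j + 1)))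
    (hmulti : ∀ i : Fin 3, ∃ j : Fin 6, triPart (v j) = i)
    (hrb : ∀ j k : Fin 6, c s(v j, v (j + 1)) = c s(v k, v (k + 1)) → j = k)
    (hnc : ∃ j : Fin 6, triPart (v (j - 1)) = triPart (v (j + 1))) :
    HasRainbowC4Multi (triK n1 n2 n3) triPart c :=
  rainbow_of_noncyclic_C6_general n1 n2 n3 c v hinj hadj hmulti hrb hnc
end

section
/- Let G be a 3-partite graph that contains no multipartite 4-cycle, and suppose G contains two vertex-disjoint triangles T1 and T2. Then every vertex v of G not belonging to V(T1) ∪ V(T2) has at most 2 neighbors in V(T1) ∪ V(T2). -/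
/-!
Two neighbours `x, y` of `v` on a triangle `xyz` with `v ≠ z` close the 4-cycle `v x z y`,
which is multipartite because the triangle alone meets all three parts. So a vertex off a
triangle sees at most one of its vertices, and at most two vertices of two triangles.
-/

lemma Fin.three_eq_or_eq_or_eq_s16 {i a b c : Fin 3} (hab : a ≠ b) (hac : a ≠ c) (hbc : b ≠ c) :
    i = a ∨ i = b ∨ i = c := by
  revert i a b c
  decide

section

variable {V : Type*} {G : SimpleGraph V} {p : V → Fin 3}

lemma hasC4Multi_of_adj_triangle (hpart : ∀ u v : V, G.Adj u v → p u ≠ p v) {v x y z : V}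
    (hxy : G.Adj x y) (hxz : G.Adj x z) (hyz : G.Adj y z)
    (hvx : G.Adj v x) (hvy : G.Adj v y) (hvz : v ≠ z) : HasC4Multi G p := by
  refine ⟨v, x, z, y, hvx.ne, hvz, hvy.ne, hxz.ne, hxy.ne, hyz.ne.symm,
    hvx, hxz, hyz.symm, hvy.symm, fun i => ?_⟩
  rcases Fin.three_eq_or_eq_or_eq_s16 (i := i) (hpart _ _ hxy) (hpart _ _ hxz) (hpart _ _ hyz)
    with rfl | rfl | rfl
  · exact ⟨x, by simp, rfl⟩
  · exact ⟨y, by simp, rfl⟩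
  · exact ⟨z, by simp, rfl⟩

lemma subsingleton_neighbors_in_triangle (hpart : ∀ u v : V, G.Adj u v → p u ≠ p v)
    (hfree : ¬ HasC4Multi G p) {x y z : V} (hxy : G.Adj x y) (hxz : G.Adj x z)
    (hyz : G.Adj y z) {v : V} (hv : v ∉ ({x, y, z} : Set V)) :
    {u ∈ ({x, y, z} : Set V) | G.Adj v u}.Subsingleton := by
  simp only [Set.mem_insert_iff, Set.mem_singleton_iff, not_or] at hv
  obtain ⟨hvx, hvy, hvz⟩ := hv
  rintro u ⟨hu, hvu⟩ w ⟨hw, hvw⟩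
  by_contra hne
  apply hfree
  simp only [Set.mem_insert_iff, Set.mem_singleton_iff] at hu hw
  rcases hu with rfl | rfl | rfl <;> rcases hw with rfl | rfl | rfl
  · exact absurd rfl hne
  · exact hasC4Multi_of_adj_triangle hpart hxy hxz hyz hvu hvw hvz
  · exact hasC4Multi_of_adj_triangle hpart hxz hxy hyz.symm hvu hvw hvy
  · exact hasC4Multi_of_adj_triangle hpart hxy.symm hyz hxz hvu hvw hvz
  · exact absurd rfl hne
  · exact hasC4Multi_of_adj_triangle hpart hyz hxy.symm hxz.symm hvu hvw hvx
  · exact hasC4Multi_of_adj_triangle hpart hxz.symm hyz.symm hxy hvu hvw hvy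
  · exact hasC4Multi_of_adj_triangle hpart hyz.symm hxz.symm hxy.symm hvu hvw hvx
  · exact absurd rfl hne

end

theorem claim3_general {V : Type*} (G : SimpleGraph V) (p : V → Fin 3)
    (hpart : ∀ u v : V, G.Adj u v → p u ≠ p v)
    (hfree : ¬ HasC4Multi G p)
    (a b d a' b' d' : V)
    (hT1 : G.Adj a b ∧ G.Adj b d ∧ G.Adj a d)
    (hT2 : G.Adj a' b' ∧ G.Adj b' d' ∧ G.Adj a' d')
    (v : V) (hv : v ∉ ({a, b, d, a', b', d'} : Set V)) :
    {u ∈ ({a, b, d, a', b', d'} : Set V) | G.Adj v u}.ncard ≤ 2 := by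
  have hv₁ : v ∉ ({a, b, d} : Set V) := fun h => hv (by simp_all)
  have hv₂ : v ∉ ({a', b', d'} : Set V) := fun h => hv (by simp_all)
  have h₁ := subsingleton_neighbors_in_triangle hpart hfree hT1.1 hT1.2.2 hT1.2.1 hv₁
  have h₂ := subsingleton_neighbors_in_triangle hpart hfree hT2.1 hT2.2.2 hT2.2.1 hv₂
  have hsplit : {u ∈ ({a, b, d, a', b', d'} : Set V) | G.Adj v u} =
      {u ∈ ({a, b, d} : Set V) | G.Adj v u} ∪ {u ∈ ({a', b', d'} : Set V) | G.Adj v u} := by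
    ext u
    simp only [Set.mem_union, Set.mem_ofPred_eq, Set.mem_insert_iff, Set.mem_singleton_iff]
    tauto
  calc _ ≤ {u ∈ ({a, b, d} : Set V) | G.Adj v u}.ncard
          + {u ∈ ({a', b', d'} : Set V) | G.Adj v u}.ncard := hsplit ▸ Set.ncard_union_le _ _
    _ ≤ 1 + 1 := add_le_add (Set.ncard_le_one_iff_subsingleton.mpr h₁)
        (Set.ncard_le_one_iff_subsingleton.mpr h₂)

/-- in a `C4^multi`-free 3-partite graph containing two vertex-disjoint
triangles, every vertex outside the two triangles has at most 2 neighbors among their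
six vertices. -/
theorem claim3 {V : Type*} [Fintype V] (G : SimpleGraph V) (p : V → Fin 3)
    (hpart : ∀ u v : V, G.Adj u v → p u ≠ p v)
    (hfree : ¬ HasC4Multi G p)
    (a b d a' b' d' : V)
    (hT1 : G.Adj a b ∧ G.Adj b d ∧ G.Adj a d)
    (hT2 : G.Adj a' b' ∧ G.Adj b' d' ∧ G.Adj a' d')
    (hdisj : (({a, b, d} : Set V) ∩ {a', b', d'}) = ∅)
    (v : V) (hv : v ∉ ({a, b, d, a', b', d'} : Set V)) :
    {u ∈ ({a, b, d, a', b', d'} : Set V) | G.Adj v u}.ncard ≤ 2 :=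
  claim3_general G p hpart hfree a b d a' b' d' hT1 hT2 v hv
end

section
/- For integers n1 ≥ n2 ≥ n3 ≥ 1, let G be a subgraph of K_{n1,n2,n3} that contains no multipartite 4-cycle and satisfies e(G) ≥ n1·n2 + n3 + 2. Then G contains two distinct triangles that share at most one common vertex. -/
/-!
Two vertices in different parts have at most one common neighbour, since two would span a
multipartite 4-cycle. Hence two triangles sharing two vertices coincide, so if the theorem fails,
all triangles of `G` coincide and deleting one edge leaves a triangle-free graph with more than
`n1 * n2 + n3` edges.

That is impossible: a triangle-free `C4^multi`-free graph with parts `A`, `B`, `C`, where `C` is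
a smallest one, has at most `|A| |B| + |C|` edges. For `x` in one part the rectangles
`N_Y(x) × N_Z(x)` are disjoint and contain no edge, so `∑ d_Y(x) d_Z(x) + e(Y, Z) ≤ |Y| |Z|`, which
settles the case where all vertices of `C` have neighbours on both sides. Otherwise one deletes a
vertex, or a pair of vertices in different parts, of small total degree and inducts; if no such
deletion is possible, a vertex of `C` with neighbours on one side only starts a cyclic chain of
such vertices whose degrees must strictly decrease.
-/

open Finset

theorem HasC4Multi.mono {V : Type*} {G G' : SimpleGraph V} {p : V → Fin 3} (h : HasC4Multi G' p)
    (hle : G' ≤ G) : HasC4Multi G p :=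
  let ⟨a, b, c, d, hab, hac, had, hbc, hbd, hcd, e₁, e₂, e₃, e₄, hparts⟩ := h
  ⟨a, b, c, d, hab, hac, had, hbc, hbd, hcd, hle e₁, hle e₂, hle e₃, hle e₄, hparts⟩

namespace Tripartite

variable {V : Type*} {H : SimpleGraph V} {p : V → Fin 3}

lemma fin3_eq_or_eq_or_eq {x y z : Fin 3} (hxy : x ≠ y) (hxz : x ≠ z) (hyz : y ≠ z) (i : Fin 3) :
    i = x ∨ i = y ∨ i = z := by
  revert x y z i; decide

lemma eq_of_adj_of_adj (hfree : ¬ HasC4Multi H p) (hp : ∀ ⦃u v⦄, H.Adj u v → p u ≠ p v)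
    {x y z w : V} (hxy : p x ≠ p y) (hxz : H.Adj x z) (hyz : H.Adj y z) (hxw : H.Adj x w)
    (hyw : H.Adj y w) : z = w := by
  by_contra hzw
  refine hfree ⟨x, z, y, w, hxz.ne, fun h => hxy (congrArg p h), hxw.ne, hyz.ne.symm, hzw,
    hyw.ne, hxz, hyz.symm, hyw, hxw.symm, fun i => ?_⟩
  rcases fin3_eq_or_eq_or_eq hxy (hp hxz) (hp hyz) i with rfl | rfl | rfl
  · exact ⟨x, by simp, rfl⟩
  · exact ⟨y, by simp, rfl⟩
  · exact ⟨z, by simp, rfl⟩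

lemma eq_of_isClique_of_one_lt_ncard_inter [Finite V] (hfree : ¬ HasC4Multi H p)
    (hp : ∀ ⦃u v⦄, H.Adj u v → p u ≠ p v) {s t : Set V} (hs : H.IsClique s) (ht : H.IsClique t)
    (hst : s.ncard = t.ncard) (h : 1 < (s ∩ t).ncard) : s = t := by
  by_contra hne
  obtain ⟨z, hzs, hzt⟩ : ∃ z ∈ s, z ∉ t := by
    by_contra! hsub
    exact hne (Set.eq_of_subset_of_ncard_le hsub hst.ge)
  obtain ⟨z', hz't, hz's⟩ : ∃ z ∈ t, z ∉ s := by
    by_contra! hsub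
    exact hne (Set.eq_of_subset_of_ncard_le hsub hst.le).symm
  obtain ⟨x, y, ⟨hxs, hxt⟩, ⟨hys, hyt⟩, hxy⟩ := (Set.one_lt_ncard_iff (Set.toFinite _)).1 h
  have hxz : x ≠ z := by rintro rfl; exact hzt hxt
  have hyz : y ≠ z := by rintro rfl; exact hzt hyt
  have hxz' : x ≠ z' := by rintro rfl; exact hz's hxs
  have hyz' : y ≠ z' := by rintro rfl; exact hz's hys
  have := eq_of_adj_of_adj hfree hp (hp (hs hxs hys hxy)) (hs hxs hzs hxz) (hs hys hzs hyz)
    (ht hxt hz't hxz') (ht hyt hz't hyz')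
  exact hz's (this ▸ hzs)

lemma isClique_triple {a b c : V} (hab : H.Adj a b) (hbc : H.Adj b c) (hac : H.Adj a c) :
    H.IsClique ({a, b, c} : Set V) := by
  simp [SimpleGraph.isClique_insert, hab, hac, hbc]

lemma triangles_eq_or_ncard_inter_le_one [Finite V] (hfree : ¬ HasC4Multi H p)
    (hp : ∀ ⦃u v⦄, H.Adj u v → p u ≠ p v) {a b d a' b' d' : V} (hab : H.Adj a b)
    (hbd : H.Adj b d) (had : H.Adj a d) (hab' : H.Adj a' b') (hbd' : H.Adj b' d')
    (had' : H.Adj a' d') :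
    ({a, b, d} : Set V) = {a', b', d'} ∨ (({a, b, d} : Set V) ∩ {a', b', d'}).ncard ≤ 1 := by
  refine or_iff_not_imp_right.2 fun h => eq_of_isClique_of_one_lt_ncard_inter hfree hp
    (isClique_triple hab hbd had) (isClique_triple hab' hbd' had') ?_ (not_le.1 h)
  rw [Set.ncard_eq_three.2 ⟨a, b, d, hab.ne, had.ne, hbd.ne, rfl⟩,
    Set.ncard_eq_three.2 ⟨a', b', d', hab'.ne, had'.ne, hbd'.ne, rfl⟩]

lemma cliqueFree_deleteEdges_of_forall_triangle_eq {a b d : V} (hab : H.Adj a b)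
    (hsame : ∀ ⦃u v w⦄, H.Adj u v → H.Adj v w → H.Adj u w → ({u, v, w} : Set V) = {a, b, d}) :
    (H.deleteEdges {s(a, b)}).CliqueFree 3 := by
  classical
  intro t ht
  obtain ⟨u, v, w, huv, huw, hvw, rfl⟩ := SimpleGraph.is3Clique_iff.1 ht
  have hle := H.deleteEdges_le {s(a, b)}
  have hset := hsame (hle huv) (hle hvw) (hle huw)
  have : (H.deleteEdges {s(a, b)}).Adj a b :=
    isClique_triple huv hvw huw (by rw [hset]; simp) (by rw [hset]; simp) hab.ne
  simp at this

variable [DecidableRel H.Adj]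

def degIn (H : SimpleGraph V) [DecidableRel H.Adj] (X : Finset V) (v : V) : ℕ :=
  #(X.filter (H.Adj v))

lemma degIn_le_card (X : Finset V) (v : V) : degIn H X v ≤ #X := card_filter_le _ _

lemma card_filter_adj_adj_le_one (hfree : ¬ HasC4Multi H p)
    (hp : ∀ ⦃u v⦄, H.Adj u v → p u ≠ p v) {x y : V} (hxy : p x ≠ p y) (X : Finset V) :
    #{z ∈ X | H.Adj x z ∧ H.Adj y z} ≤ 1 :=
  card_le_one.2 fun _ hz _ hw =>
    eq_of_adj_of_adj hfree hp hxy (mem_filter.1 hz).2.1 (mem_filter.1 hz).2.2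
      (mem_filter.1 hw).2.1 (mem_filter.1 hw).2.2

lemma degIn_add_degIn_le (hfree : ¬ HasC4Multi H p) (hp : ∀ ⦃u v⦄, H.Adj u v → p u ≠ p v)
    {x y : V} (hxy : p x ≠ p y) (X : Finset V) : degIn H X x + degIn H X y ≤ #X + 1 := by
  classical
  have hcommon := card_filter_adj_adj_le_one hfree hp hxy X
  have hunion : #{z ∈ X | H.Adj x z ∨ H.Adj y z} ≤ #X := card_filter_le _ _
  rw [filter_and] at hcommon
  rw [filter_or] at hunion
  have := card_union_add_card_inter (X.filter (H.Adj x)) (X.filter (H.Adj y))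
  unfold degIn
  omega

lemma degIn_filter_adj_le_one (hfree : ¬ HasC4Multi H p)
    (hp : ∀ ⦃u v⦄, H.Adj u v → p u ≠ p v) {x y : V} (hxy : p x ≠ p y) (X : Finset V) :
    degIn H (X.filter (H.Adj x)) y ≤ 1 := by
  rw [degIn, filter_filter]
  exact card_filter_adj_adj_le_one hfree hp hxy X

lemma card_interedges_eq_sum (X Y : Finset V) : #(H.interedges X Y) = ∑ x ∈ X, degIn H Y x := by
  rw [SimpleGraph.interedges_def, card_filter, sum_product]
  simp only [degIn, card_filter]

lemma card_interedges_comm (X Y : Finset V) : #(H.interedges X Y) = #(H.interedges Y X) := by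
  have := H.symm
  exact Rel.card_interedges_comm _ _

def tripartiteEdges (H : SimpleGraph V) [DecidableRel H.Adj] (A B C : Finset V) : ℕ :=
  #(H.interedges A B) + #(H.interedges B C) + #(H.interedges C A)

lemma tripartiteEdges_rotate (A B C : Finset V) :
    tripartiteEdges H B C A = tripartiteEdges H A B C := by
  unfold tripartiteEdges; omega

lemma tripartiteEdges_swap (A B C : Finset V) :
    tripartiteEdges H B A C = tripartiteEdges H A B C := by
  unfold tripartiteEdges
  rw [card_interedges_comm B A, card_interedges_comm A C, card_interedges_comm C B]
  omega

lemma card_common_adj_add_ite_le_one (hfree : ¬ HasC4Multi H p)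
    (hp : ∀ ⦃u v⦄, H.Adj u v → p u ≠ p v) (htri : H.CliqueFree 3) {y z : V} (hyz : p y ≠ p z)
    (X : Finset V) :
    #{x ∈ X | H.Adj y x ∧ H.Adj z x} + (if H.Adj y z then 1 else 0) ≤ 1 := by
  classical
  split_ifs with h
  · rw [filter_false_of_mem fun x _ hx => htri {x, y, z}
      (SimpleGraph.is3Clique_triple_iff.2 ⟨hx.1.symm, hx.2.symm, h⟩)]
    simp
  · simpa using card_filter_adj_adj_le_one hfree hp hyz X

/-- The neighbourhoods of the vertices of `X` span disjoint rectangles in `Y × Z`, none of which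
contains an edge of the triangle-free graph `H`. -/
lemma sum_degIn_mul_degIn_add_card_interedges_le (hfree : ¬ HasC4Multi H p)
    (hp : ∀ ⦃u v⦄, H.Adj u v → p u ≠ p v) (htri : H.CliqueFree 3) (X : Finset V)
    {Y Z : Finset V} (hYZ : ∀ y ∈ Y, ∀ z ∈ Z, p y ≠ p z) :
    ∑ x ∈ X, degIn H Y x * degIn H Z x + #(H.interedges Y Z) ≤ #Y * #Z := by
  have hcount : ∑ x ∈ X, degIn H Y x * degIn H Z x =
      ∑ q ∈ Y ×ˢ Z, #{x ∈ X | H.Adj q.1 x ∧ H.Adj q.2 x} := by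
    simp_rw [degIn, ← card_product, ← filter_product, card_filter]
    rw [sum_comm]
    simp only [H.adj_comm]
  rw [hcount, SimpleGraph.interedges_def, card_filter, ← sum_add_distrib, ← card_product,
    card_eq_sum_ones]
  exact sum_le_sum fun q hq => card_common_adj_add_ite_le_one hfree hp htri
    (hYZ _ (mem_product.1 hq).1 _ (mem_product.1 hq).2) X

lemma tripartiteEdges_le_of_forall_one_le (hfree : ¬ HasC4Multi H p)
    (hp : ∀ ⦃u v⦄, H.Adj u v → p u ≠ p v) (htri : H.CliqueFree 3) {X Y Z : Finset V}
    (hYZ : ∀ y ∈ Y, ∀ z ∈ Z, p y ≠ p z) (hX : ∀ x ∈ X, 1 ≤ degIn H Y x ∧ 1 ≤ degIn H Z x) :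
    tripartiteEdges H X Y Z ≤ #Y * #Z + #X := by
  have hpoint : ∀ x ∈ X, degIn H Y x + degIn H Z x ≤ degIn H Y x * degIn H Z x + 1 := by
    intro x hx
    obtain ⟨hY, hZ⟩ := hX x hx
    nlinarith
  have hsum := sum_le_sum hpoint
  rw [sum_add_distrib, sum_add_distrib, sum_const, smul_eq_mul, mul_one] at hsum
  have := sum_degIn_mul_degIn_add_card_interedges_le hfree hp htri X hYZ
  unfold tripartiteEdges
  rw [card_interedges_comm Z X, card_interedges_eq_sum X Y, card_interedges_eq_sum X Z]
  omega

lemma card_le_of_forall_card_lt_degIn_add (hfree : ¬ HasC4Multi H p)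
    (hp : ∀ ⦃u v⦄, H.Adj u v → p u ≠ p v) (htri : H.CliqueFree 3) {X Y Z : Finset V}
    (hYZ : ∀ y ∈ Y, ∀ z ∈ Z, p y ≠ p z) (hZY : #Z ≤ #Y)
    (hX : ∀ x ∈ X, #Y < degIn H Y x + degIn H Z x) : #X ≤ #Z := by
  rcases X.eq_empty_or_nonempty with rfl | ⟨x₀, hx₀⟩
  · simp
  have hpoint : ∀ x ∈ X, #Y ≤ degIn H Y x * degIn H Z x := by
    intro x hx
    have hlt := hX x hx
    have hY := degIn_le_card (H := H) Y x
    have hZ := degIn_le_card (H := H) Z x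
    nlinarith
  have hY : 0 < #Y := by
    have hlt := hX x₀ hx₀
    have hY := degIn_le_card (H := H) Y x₀
    have hZ := degIn_le_card (H := H) Z x₀
    omega
  have hlower := card_nsmul_le_sum X _ _ hpoint
  have hupper := sum_degIn_mul_degIn_add_card_interedges_le hfree hp htri X hYZ
  rw [smul_eq_mul] at hlower
  exact le_of_mul_le_mul_right (by rw [mul_comm #Z]; omega) hY

structure InDistinctParts (p : V → Fin 3) (A B C : Finset V) : Prop where
  ab : ∀ a ∈ A, ∀ b ∈ B, p a ≠ p b
  bc : ∀ b ∈ B, ∀ c ∈ C, p b ≠ p c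
  ca : ∀ c ∈ C, ∀ a ∈ A, p c ≠ p a

namespace InDistinctParts

variable {A B C : Finset V}

lemma rotate (h : InDistinctParts p A B C) : InDistinctParts p B C A := ⟨h.bc, h.ca, h.ab⟩

lemma swap (h : InDistinctParts p A B C) : InDistinctParts p B A C :=
  ⟨fun b hb a ha => (h.ab a ha b hb).symm, fun a ha c hc => (h.ca c hc a ha).symm,
    fun c hc b hb => (h.bc b hb c hc).symm⟩

lemma mono (h : InDistinctParts p A B C) {A' B' C' : Finset V} (hA : A' ⊆ A) (hB : B' ⊆ B)
    (hC : C' ⊆ C) : InDistinctParts p A' B' C' :=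
  ⟨fun a ha b hb => h.ab a (hA ha) b (hB hb), fun b hb c hc => h.bc b (hB hb) c (hC hc),
    fun c hc a ha => h.ca c (hC hc) a (hA ha)⟩

end InDistinctParts

/-- Pairs `x ∈ X`, `y ∈ Y` that cannot be deleted in the induction of `boundBelow`. -/
def HeavyPairs (H : SimpleGraph V) [DecidableRel H.Adj] (n : ℕ) (X Y Z : Finset V) : Prop :=
  ∀ x ∈ X, ∀ y ∈ Y, n + 2 + (if H.Adj x y then 1 else 0) ≤
    degIn H Y x + degIn H Z x + (degIn H Z y + degIn H X y)

lemma HeavyPairs.symm {n : ℕ} {X Y Z : Finset V} (h : HeavyPairs H n X Y Z) :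
    HeavyPairs H n Y X Z := by
  intro y hy x hx
  have := h x hx y hy
  simp only [H.adj_comm x y] at this
  omega

structure HeavyTriple (H : SimpleGraph V) [DecidableRel H.Adj] (p : V → Fin 3) (n : ℕ)
    (A B C : Finset V) : Prop where
  parts : InDistinctParts p A B C
  card_a : #A = n
  card_b : #B = n
  card_c : #C = n
  heavy_ab : HeavyPairs H n A B C
  heavy_bc : HeavyPairs H n B C A
  heavy_ca : HeavyPairs H n C A B

namespace HeavyTriple

variable {n : ℕ} {A B C : Finset V}

lemma rotate (h : HeavyTriple H p n A B C) : HeavyTriple H p n B C A :=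
  ⟨h.parts.rotate, h.card_b, h.card_c, h.card_a, h.heavy_bc, h.heavy_ca, h.heavy_ab⟩

lemma swap (h : HeavyTriple H p n A B C) : HeavyTriple H p n B A C :=
  ⟨h.parts.swap, h.card_b, h.card_a, h.card_c, h.heavy_ab.symm, h.heavy_ca.symm, h.heavy_bc.symm⟩

lemma one_le_degIn (hfree : ¬ HasC4Multi H p) (hp : ∀ ⦃u v⦄, H.Adj u v → p u ≠ p v)
    (h : HeavyTriple H p n A B C) {a : V} (ha : a ∈ A) (hCa : degIn H C a = 0) {c : V}
    (hc : c ∈ C) : 1 ≤ degIn H A c := by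
  have hheavy := h.heavy_ca c hc a ha
  have hcodeg := degIn_add_degIn_le hfree hp (h.parts.ca c hc a ha) B
  rw [h.card_b] at hcodeg
  omega

/-- Each neighbour of `a` has many neighbours in `C`, while each vertex of `C` is adjacent to at
most one neighbour of `a`. -/
lemma degIn_lt_degIn (hfree : ¬ HasC4Multi H p) (hp : ∀ ⦃u v⦄, H.Adj u v → p u ≠ p v)
    (h : HeavyTriple H p n A B C) {a c : V} (ha : a ∈ A) (hCa : degIn H C a = 0) (hc : c ∈ C)
    (hBc : degIn H B c = 0) : degIn H A c < degIn H B a := by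
  have hlow : ∀ b ∈ B.filter (H.Adj a), degIn H A c + 2 - degIn H B a ≤ degIn H C b := by
    intro b hb
    obtain ⟨hbB, hab⟩ := mem_filter.1 hb
    have hheavy := h.heavy_ab a ha b hbB
    have hcodeg := degIn_add_degIn_le hfree hp (h.parts.bc b hbB c hc) A
    rw [if_pos hab, h.card_a] at *
    omega
  have hcap : ∑ b ∈ B.filter (H.Adj a), degIn H C b ≤ #C :=
    calc ∑ b ∈ B.filter (H.Adj a), degIn H C b
        = ∑ c ∈ C, degIn H (B.filter (H.Adj a)) c := by
          rw [← card_interedges_eq_sum, card_interedges_comm, card_interedges_eq_sum]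
      _ ≤ ∑ _c ∈ C, 1 :=
          sum_le_sum fun c hc => degIn_filter_adj_le_one hfree hp (h.parts.ca c hc a ha).symm B
      _ = #C := by simp
  have hsum : degIn H B a * (degIn H A c + 2 - degIn H B a) ≤
      ∑ b ∈ B.filter (H.Adj a), degIn H C b := by
    have := card_nsmul_le_sum _ _ _ hlow
    rwa [smul_eq_mul] at this
  have hac := h.heavy_ca c hc a ha
  have hcA := degIn_le_card (H := H) A c
  rw [h.card_c] at hcap
  rw [h.card_a] at hcA
  by_contra! hle
  obtain ⟨k, hk⟩ := Nat.exists_eq_add_of_le hle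
  rw [show degIn H A c + 2 - degIn H B a = k + 2 by omega, Nat.mul_add] at hsum
  have hzk : k ≤ degIn H B a * k := Nat.le_mul_of_pos_left k (by omega)
  omega

/-- A vertex of `C` with neighbours on one side only starts a chain of such vertices through
`B` and `A`; their degrees would have to decrease strictly around the cycle. -/
theorem tripartiteEdges_le (hfree : ¬ HasC4Multi H p) (hp : ∀ ⦃u v⦄, H.Adj u v → p u ≠ p v)
    (htri : H.CliqueFree 3) (h : HeavyTriple H p n A B C) :
    tripartiteEdges H A B C ≤ n * n + n := by
  have hAB := h.parts.ab
  have hBC := h.parts.bc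
  have hCA := h.parts.ca
  by_cases hC : ∀ c ∈ C, 1 ≤ degIn H A c ∧ 1 ≤ degIn H B c
  · have := tripartiteEdges_le_of_forall_one_le hfree hp htri hAB hC
    rwa [← tripartiteEdges_rotate, h.card_a, h.card_b, h.card_c] at this
  push Not at hC
  obtain ⟨c, hc, hc'⟩ := hC
  have hc₀ : degIn H A c = 0 ∨ degIn H B c = 0 := by omega
  clear hc'
  wlog hBc : degIn H B c = 0 generalizing A B
  · rw [← tripartiteEdges_swap]
    exact this h.swap h.parts.swap.ab h.parts.swap.bc h.parts.swap.ca hc₀.symm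
      (hc₀.resolve_right hBc)
  have hB : ∀ b ∈ B, 1 ≤ degIn H C b := fun b hb => h.rotate.rotate.one_le_degIn hfree hp hc hBc hb
  by_cases hB' : ∀ b ∈ B, 1 ≤ degIn H A b
  · have := tripartiteEdges_le_of_forall_one_le hfree hp htri hCA fun b hb => ⟨hB b hb, hB' b hb⟩
    rwa [tripartiteEdges_rotate, h.card_a, h.card_b, h.card_c, mul_comm] at this
  push Not at hB'
  obtain ⟨b, hb, hAb⟩ := hB'
  replace hAb : degIn H A b = 0 := by omega
  have hA : ∀ a ∈ A, 1 ≤ degIn H B a := fun a ha => h.rotate.one_le_degIn hfree hp hb hAb ha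
  by_cases hA' : ∀ a ∈ A, 1 ≤ degIn H C a
  · have := tripartiteEdges_le_of_forall_one_le hfree hp htri hBC fun a ha => ⟨hA a ha, hA' a ha⟩
    rwa [h.card_a, h.card_b, h.card_c] at this
  push Not at hA'
  obtain ⟨a, ha, hCa⟩ := hA'
  replace hCa : degIn H C a = 0 := by omega
  have hcb := h.rotate.rotate.degIn_lt_degIn hfree hp hc hBc hb hAb
  have hba := h.rotate.degIn_lt_degIn hfree hp hb hAb ha hCa
  have hac := h.degIn_lt_degIn hfree hp ha hCa hc hBc
  omega

end HeavyTriple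

def BoundBelow (H : SimpleGraph V) [DecidableRel H.Adj] (p : V → Fin 3) (N : ℕ) : Prop :=
  ∀ ⦃A B C : Finset V⦄, #A + #B + #C < N → InDistinctParts p A B C → #C ≤ #A → #C ≤ #B →
    tripartiteEdges H A B C ≤ #A * #B + #C

lemma BoundBelow.mono {M N : ℕ} (h : BoundBelow H p N) (hMN : M ≤ N) : BoundBelow H p M :=
  fun _ _ _ hlt => h (hlt.trans_le hMN)

section

variable [DecidableEq V]

lemma degIn_erase {X : Finset V} {w : V} (hw : w ∈ X) (v : V) :
    degIn H X v = degIn H (X.erase w) v + if H.Adj v w then 1 else 0 := by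
  unfold degIn
  rw [filter_erase]
  split_ifs with h
  · rw [card_erase_add_one (mem_filter.2 ⟨hw, h⟩)]
  · rw [erase_eq_of_notMem (by simp [h]), add_zero]

lemma card_interedges_erase_left {X : Finset V} {x : V} (hx : x ∈ X) (Y : Finset V) :
    #(H.interedges X Y) = #(H.interedges (X.erase x) Y) + degIn H Y x := by
  rw [card_interedges_eq_sum, card_interedges_eq_sum, sum_erase_add _ _ hx]

lemma tripartiteEdges_erase (A B : Finset V) {C : Finset V} {w : V} (hw : w ∈ C) :
    tripartiteEdges H A B C = tripartiteEdges H A B (C.erase w) + degIn H A w + degIn H B w := by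
  unfold tripartiteEdges
  rw [card_interedges_comm B C, card_interedges_comm B (C.erase w),
    card_interedges_erase_left hw, card_interedges_erase_left hw]
  omega

lemma tripartiteEdges_erase_erase (A : Finset V) {B C : Finset V} {b w : V} (hb : b ∈ B)
    (hw : w ∈ C) :
    tripartiteEdges H A B C + (if H.Adj b w then 1 else 0) =
      tripartiteEdges H A (B.erase b) (C.erase w) + (degIn H C b + degIn H A b) +
        (degIn H A w + degIn H B w) := by
  have hrot₁ := tripartiteEdges_rotate (H := H) (C.erase w) A B
  have hrot₂ := tripartiteEdges_rotate (H := H) A (B.erase b) (C.erase w)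
  have hrot₃ := tripartiteEdges_rotate (H := H) (B.erase b) (C.erase w) A
  rw [tripartiteEdges_erase A B hw, degIn_erase hw b, hrot₁, tripartiteEdges_erase _ A hb]
  omega

variable {A B C : Finset V}

lemma tripartiteEdges_le_of_card_lt (hfree : ¬ HasC4Multi H p)
    (hp : ∀ ⦃u v⦄, H.Adj u v → p u ≠ p v) (htri : H.CliqueFree 3)
    (ih : BoundBelow H p (#A + #B + #C)) (hABC : InDistinctParts p A B C) (hCA : #C ≤ #A)
    (hCB : #C < #B) : tripartiteEdges H A B C ≤ #A * #B + #C := by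
  by_cases hlow : ∃ b ∈ B, degIn H C b + degIn H A b ≤ #A
  · obtain ⟨b, hb, hdeg⟩ := hlow
    have hcard := card_erase_add_one hb
    have hbound := ih (by omega) (hABC.mono subset_rfl (erase_subset b B) subset_rfl) hCA
      (by omega)
    have herase := tripartiteEdges_erase (H := H) C A hb
    rw [tripartiteEdges_rotate B, tripartiteEdges_rotate A, tripartiteEdges_rotate (B.erase b),
      tripartiteEdges_rotate A] at herase
    rw [← hcard, mul_add_one]
    omega
  · push Not at hlow
    have := card_le_of_forall_card_lt_degIn_add hfree hp htri
      (fun a ha c hc => (hABC.ca c hc a ha).symm) hCA fun b hb => by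
        have := hlow b hb; omega
    omega

lemma tripartiteEdges_le_of_not_heavyPairs {n : ℕ} (ih : BoundBelow H p (3 * n))
    (hABC : InDistinctParts p A B C) (hA : #A = n) (hB : #B = n) (hC : #C = n)
    (h : ¬ HeavyPairs H n B C A) : tripartiteEdges H A B C ≤ n * n + n := by
  simp only [HeavyPairs, not_forall, not_le] at h
  obtain ⟨b, hb, c, hc, hlt⟩ := h
  have hb' := card_erase_add_one hb
  have hc' := card_erase_add_one hc
  have hbound := ih (by omega)
    (hABC.mono subset_rfl (erase_subset b B) (erase_subset c C)) (by omega) (by omega)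
  have herase := tripartiteEdges_erase_erase (H := H) A hb hc
  have hmul : n * #(B.erase b) + n = n * n := by rw [← mul_add_one, hb', hB]
  rw [hA] at hbound
  omega

theorem boundBelow (hfree : ¬ HasC4Multi H p) (hp : ∀ ⦃u v⦄, H.Adj u v → p u ≠ p v)
    (htri : H.CliqueFree 3) (N : ℕ) : BoundBelow H p N := by
  induction N with
  | zero => intro A B C h; omega
  | succ N ih =>
    intro A B C hN hABC hCA hCB
    replace ih : BoundBelow H p (#A + #B + #C) := ih.mono (by omega)
    rcases hCB.lt_or_eq with hCB | hCB
    · exact tripartiteEdges_le_of_card_lt hfree hp htri ih hABC hCA hCB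
    rcases hCA.lt_or_eq with hCA | hCA
    · rw [← tripartiteEdges_swap, mul_comm]
      exact tripartiteEdges_le_of_card_lt hfree hp htri (ih.mono (by omega)) hABC.swap hCB.le hCA
    rw [← hCA, ← hCB]
    replace ih : BoundBelow H p (3 * #C) := ih.mono (by omega)
    by_cases hbc : HeavyPairs H #C B C A
    swap
    · exact tripartiteEdges_le_of_not_heavyPairs ih hABC hCA.symm hCB.symm rfl hbc
    by_cases hca : HeavyPairs H #C C A B
    swap
    · rw [← tripartiteEdges_rotate]
      exact tripartiteEdges_le_of_not_heavyPairs ih hABC.rotate hCB.symm rfl hCA.symm hca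
    by_cases hab : HeavyPairs H #C A B C
    swap
    · rw [← tripartiteEdges_rotate, ← tripartiteEdges_rotate]
      exact tripartiteEdges_le_of_not_heavyPairs ih hABC.rotate.rotate rfl hCA.symm hCB.symm hab
    exact HeavyTriple.tripartiteEdges_le hfree hp htri
      ⟨hABC, hCA.symm, hCB.symm, rfl, hab, hbc, hca⟩

theorem tripartiteEdges_le (hfree : ¬ HasC4Multi H p) (hp : ∀ ⦃u v⦄, H.Adj u v → p u ≠ p v)
    (htri : H.CliqueFree 3) (hABC : InDistinctParts p A B C) (hCA : #C ≤ #A) (hCB : #C ≤ #B) :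
    tripartiteEdges H A B C ≤ #A * #B + #C :=
  boundBelow hfree hp htri _ (Nat.lt_succ_self _) hABC hCA hCB

end

section Fintype

variable [Fintype V]

def part (p : V → Fin 3) (i : Fin 3) : Finset V := {v | p v = i}

lemma degree_eq_sum_degIn (p : V → Fin 3) (v : V) : H.degree v = ∑ i, degIn H (part p i) v := by
  rw [← H.card_neighborFinset_eq_degree, H.neighborFinset_eq_filter,
    card_eq_sum_card_fiberwise (f := p) (t := univ) (by simp)]
  simp only [degIn, part, filter_comm]

lemma card_interedges_part_self (hp : ∀ ⦃u v⦄, H.Adj u v → p u ≠ p v) (i : Fin 3) :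
    #(H.interedges (part p i) (part p i)) = 0 := by
  rw [card_eq_zero, SimpleGraph.interedges_def, filter_eq_empty_iff]
  intro q hq hadj
  simp only [part, mem_product, mem_filter, mem_univ, true_and] at hq
  exact hp hadj (hq.1.trans hq.2.symm)

lemma card_edgeFinset_eq_tripartiteEdges (hp : ∀ ⦃u v⦄, H.Adj u v → p u ≠ p v) :
    #H.edgeFinset = tripartiteEdges H (part p 0) (part p 1) (part p 2) := by
  have hsum : 2 * #H.edgeFinset = ∑ i, ∑ j, #(H.interedges (part p i) (part p j)) := by
    rw [← H.sum_degrees_eq_twice_card_edges, ← sum_fiberwise univ p]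
    refine sum_congr rfl fun i _ => ?_
    simp only [degree_eq_sum_degIn p, card_interedges_eq_sum]
    exact sum_comm
  simp only [Fin.sum_univ_three, card_interedges_part_self hp] at hsum
  unfold tripartiteEdges
  rw [card_interedges_comm (part p 1) (part p 0), card_interedges_comm (part p 2) (part p 1),
    card_interedges_comm (part p 0) (part p 2)] at hsum
  omega

lemma inDistinctParts_part : InDistinctParts p (part p 0) (part p 1) (part p 2) := by
  refine ⟨?_, ?_, ?_⟩ <;> simp only [part, mem_filter, mem_univ, true_and] <;>
    intro _ h _ h' <;> simp [h, h']

end Fintype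

lemma card_part_triPart {n1 n2 n3 : ℕ} (i : Fin 3) :
    #(part (triPart (n1 := n1) (n2 := n2) (n3 := n3)) i) = ![n1, n2, n3] i := by
  simp only [part, card_filter, Fintype.sum_sum_type]
  fin_cases i <;> simp [triPart]

theorem ncard_edgeSet_le_of_cliqueFree {n1 n2 n3 : ℕ} (h31 : n3 ≤ n1) (h32 : n3 ≤ n2)
    {G : SimpleGraph (Fin n1 ⊕ Fin n2 ⊕ Fin n3)} (hG : G ≤ triK n1 n2 n3)
    (hfree : ¬ HasC4Multi G triPart) (htri : G.CliqueFree 3) :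
    G.edgeSet.ncard ≤ n1 * n2 + n3 := by
  classical
  have hp : ∀ ⦃u v⦄, G.Adj u v → triPart u ≠ triPart v := fun _ _ h => hG h
  have hbound := tripartiteEdges_le hfree hp htri inDistinctParts_part
  simp only [card_part_triPart] at hbound
  rw [← G.coe_edgeFinset, Set.ncard_coe_finset, card_edgeFinset_eq_tripartiteEdges hp]
  exact hbound h31 h32

end Tripartite

open Tripartite in
theorem two_triangles_of_many_edges_general (n1 n2 n3 : ℕ) (h12 : n2 ≤ n1) (h23 : n3 ≤ n2)
    (G : SimpleGraph (Fin n1 ⊕ Fin n2 ⊕ Fin n3)) (hG : G ≤ triK n1 n2 n3)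
    (hfree : ¬ HasC4Multi G triPart)
    (he : n1 * n2 + n3 + 2 ≤ G.edgeSet.ncard) :
    ∃ a b d a' b' d' : Fin n1 ⊕ Fin n2 ⊕ Fin n3,
      (G.Adj a b ∧ G.Adj b d ∧ G.Adj a d) ∧
      (G.Adj a' b' ∧ G.Adj b' d' ∧ G.Adj a' d') ∧
      ({a, b, d} : Set (Fin n1 ⊕ Fin n2 ⊕ Fin n3)) ≠ {a', b', d'} ∧
      (({a, b, d} : Set (Fin n1 ⊕ Fin n2 ⊕ Fin n3)) ∩ {a', b', d'}).ncard ≤ 1 := by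
  have hp : ∀ ⦃u v⦄, G.Adj u v → triPart u ≠ triPart v := fun _ _ h => hG h
  by_contra hcon
  have hsame : ∀ ⦃a b d a' b' d'⦄, G.Adj a b → G.Adj b d → G.Adj a d →
      G.Adj a' b' → G.Adj b' d' → G.Adj a' d' →
      ({a, b, d} : Set (Fin n1 ⊕ Fin n2 ⊕ Fin n3)) = {a', b', d'} := by
    intro a b d a' b' d' hab hbd had hab' hbd' had'
    by_contra hne
    exact hcon ⟨a, b, d, a', b', d', ⟨hab, hbd, had⟩, ⟨hab', hbd', had'⟩, hne,
      (triangles_eq_or_ncard_inter_le_one hfree hp hab hbd had hab' hbd' had').resolve_left hne⟩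
  by_cases htri : G.CliqueFree 3
  · have := ncard_edgeSet_le_of_cliqueFree (h23.trans h12) h23 hG hfree htri
    omega
  obtain ⟨a, b, d, hab, had, hbd⟩ : ∃ a b d, G.Adj a b ∧ G.Adj a d ∧ G.Adj b d := by
    simp only [SimpleGraph.CliqueFree, not_forall, not_not, SimpleGraph.is3Clique_iff] at htri
    obtain ⟨_, a, b, d, hab, had, hbd, -⟩ := htri
    exact ⟨a, b, d, hab, had, hbd⟩
  have hG' := G.deleteEdges_le {s(a, b)}
  have hcount : (G.deleteEdges {s(a, b)}).edgeSet.ncard + 1 = G.edgeSet.ncard := by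
    rw [SimpleGraph.edgeSet_deleteEdges]
    exact Set.ncard_sdiff_singleton_add_one hab
  have := ncard_edgeSet_le_of_cliqueFree (h23.trans h12) h23 (hG'.trans hG)
    (fun h => hfree (h.mono hG')) (cliqueFree_deleteEdges_of_forall_triangle_eq hab
      fun _ _ _ huv hvw huw => hsame huv hvw huw hab hbd had)
  omega

/-- a `C4^multi`-free subgraph of `K_{n1,n2,n3}` with at least
`n1*n2 + n3 + 2` edges contains two distinct triangles sharing at most one common
vertex. -/
theorem two_triangles_of_many_edges (n1 n2 n3 : ℕ) (h12 : n2 ≤ n1) (h23 : n3 ≤ n2)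
    (h3 : 1 ≤ n3)
    (G : SimpleGraph (Fin n1 ⊕ Fin n2 ⊕ Fin n3)) (hG : G ≤ triK n1 n2 n3)
    (hfree : ¬ HasC4Multi G triPart)
    (he : n1 * n2 + n3 + 2 ≤ G.edgeSet.ncard) :
    ∃ a b d a' b' d' : Fin n1 ⊕ Fin n2 ⊕ Fin n3,
      (G.Adj a b ∧ G.Adj b d ∧ G.Adj a d) ∧
      (G.Adj a' b' ∧ G.Adj b' d' ∧ G.Adj a' d') ∧
      ({a, b, d} : Set (Fin n1 ⊕ Fin n2 ⊕ Fin n3)) ≠ {a', b', d'} ∧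
      (({a, b, d} : Set (Fin n1 ⊕ Fin n2 ⊕ Fin n3)) ∩ {a', b', d'}).ncard ≤ 1 :=
  two_triangles_of_many_edges_general n1 n2 n3 h12 h23 G hG hfree he
end
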